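/- arXiv:2403.08249 — 5 statements merged into one kernel-verified Lean document; each statement's English description precedes it below -/
import Mathlib

section
/- For every point x = (x_1, ..., x_{n+1}) in the upper half space R_+^{n+1} and every r > 0, the Bessel measure m_λ (with dm_λ = x_{n+1}^{2λ} dx) of the ball B(x,r) ∩ R_+^{n+1} is comparable (with constants depending only on n and λ) to r^{n+1} x_{n+1}^{2λ} + r^{n+1+2λ}. -/
open MeasureTheory Metric

noncomputable def besselMeasure (n : ℕ) (lam : ℝ) :
    Measure (EuclideanSpace ℝ (Fin (n + 1))) :=
  ((volume : Measure (EuclideanSpace ℝ (Fin (n + 1)))).restrict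
      {x | 0 < x (Fin.last n)}).withDensity
    fun x => ENNReal.ofReal (x (Fin.last n) ^ (2 * lam))

section Aux

variable {n : ℕ}

lemma besselAux_coord_le (x y : EuclideanSpace ℝ (Fin (n + 1))) (i : Fin (n + 1)) :
    dist (x i) (y i) ≤ dist x y := by
  rw [EuclideanSpace.dist_eq]
  have h : dist (x i) (y i) ^ 2 ≤ ∑ j, dist (x j) (y j) ^ 2 :=
    Finset.single_le_sum (f := fun j => dist (x j) (y j) ^ 2)
      (fun j _ => sq_nonneg _) (Finset.mem_univ i)
  calc dist (x i) (y i) = Real.sqrt (dist (x i) (y i) ^ 2) :=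
        (Real.sqrt_sq dist_nonneg).symm
    _ ≤ _ := Real.sqrt_le_sqrt h

lemma besselAux_meas_coord : Measurable fun y : EuclideanSpace ℝ (Fin (n + 1)) =>
    y (Fin.last n) :=
  (EuclideanSpace.proj (Fin.last n)).continuous.measurable

lemma besselAux_meas_density (lam : ℝ) (hlam : 0 ≤ lam) :
    Measurable fun y : EuclideanSpace ℝ (Fin (n + 1)) =>
      ENNReal.ofReal (y (Fin.last n) ^ (2 * lam)) :=
  (((EuclideanSpace.proj (Fin.last n)).continuous.rpow_const
    (fun _ => Or.inr (by positivity))).measurable).ennreal_ofReal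

lemma besselAux_volume_ball (x : EuclideanSpace ℝ (Fin (n + 1))) {ρ : ℝ} (hρ : 0 ≤ ρ) :
    volume (ball x ρ) =
      ENNReal.ofReal (ρ ^ (n + 1) * (volume (ball (0 : EuclideanSpace ℝ (Fin (n + 1))) 1)).toReal) := by
  rw [Measure.addHaar_ball _ _ hρ, finrank_euclideanSpace_fin,
    ENNReal.ofReal_mul (by positivity), ENNReal.ofReal_toReal measure_ball_lt_top.ne]

lemma besselAux_apply (lam : ℝ) {S : Set (EuclideanSpace ℝ (Fin (n + 1)))}
    (hS : MeasurableSet S) (hsub : S ⊆ {y | 0 < y (Fin.last n)}) :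
    besselMeasure n lam S = ∫⁻ y in S, ENNReal.ofReal (y (Fin.last n) ^ (2 * lam)) ∂volume := by
  unfold besselMeasure
  rw [withDensity_apply _ hS, Measure.restrict_restrict hS, Set.inter_eq_left.mpr hsub]

lemma besselAux_lower (lam : ℝ) (hlam : 0 ≤ lam) {S : Set (EuclideanSpace ℝ (Fin (n + 1)))}
    (hS : MeasurableSet S) (hsub : S ⊆ {y | 0 < y (Fin.last n)})
    (z : EuclideanSpace ℝ (Fin (n + 1))) {ρ b : ℝ} (hρ : 0 < ρ) (hb : 0 < b)
    (hsub2 : ball z ρ ⊆ S) (hcoord : ∀ y ∈ ball z ρ, b ≤ y (Fin.last n)) :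
    ENNReal.ofReal (b ^ (2 * lam) *
        (ρ ^ (n + 1) * (volume (ball (0 : EuclideanSpace ℝ (Fin (n + 1))) 1)).toReal))
      ≤ besselMeasure n lam S := by
  rw [besselAux_apply lam hS hsub]
  calc ENNReal.ofReal (b ^ (2 * lam) *
        (ρ ^ (n + 1) * (volume (ball (0 : EuclideanSpace ℝ (Fin (n + 1))) 1)).toReal))
      = ENNReal.ofReal (b ^ (2 * lam)) * volume (ball z ρ) := by
        rw [besselAux_volume_ball z hρ.le, ← ENNReal.ofReal_mul (by positivity)]
    _ = ∫⁻ _ in ball z ρ, ENNReal.ofReal (b ^ (2 * lam)) ∂volume :=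
        (setLIntegral_const _ _).symm
    _ ≤ ∫⁻ y in ball z ρ, ENNReal.ofReal (y (Fin.last n) ^ (2 * lam)) ∂volume := by
        refine setLIntegral_mono (besselAux_meas_density lam hlam) fun y hy => ?_
        exact ENNReal.ofReal_le_ofReal
          (Real.rpow_le_rpow hb.le (hcoord y hy) (by positivity))
    _ ≤ ∫⁻ y in S, ENNReal.ofReal (y (Fin.last n) ^ (2 * lam)) ∂volume :=
        lintegral_mono' (Measure.restrict_mono hsub2 le_rfl) le_rfl

end Aux

/-- `m_λ(B_{ℝ₊^{n+1}}(x,r)) ∼ r^{n+1} x_{n+1}^{2λ} + r^{n+1+2λ}` with constants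
depending only on `n` and `λ`. -/
theorem stmt0 (n : ℕ) (lam : ℝ) (hlam : 0 < lam) :
    ∃ C₁ C₂ : ℝ, 0 < C₁ ∧ 0 < C₂ ∧
      ∀ x : EuclideanSpace ℝ (Fin (n + 1)), 0 < x (Fin.last n) →
        ∀ r : ℝ, 0 < r →
          ENNReal.ofReal (C₁ * (r ^ ((n : ℝ) + 1) * x (Fin.last n) ^ (2 * lam)
              + r ^ ((n : ℝ) + 1 + 2 * lam)))
            ≤ besselMeasure n lam (ball x r ∩ {y | 0 < y (Fin.last n)}) ∧
          besselMeasure n lam (ball x r ∩ {y | 0 < y (Fin.last n)})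
            ≤ ENNReal.ofReal (C₂ * (r ^ ((n : ℝ) + 1) * x (Fin.last n) ^ (2 * lam)
              + r ^ ((n : ℝ) + 1 + 2 * lam))) := by
  set E := EuclideanSpace ℝ (Fin (n + 1))
  set κ : ℝ := (volume (ball (0 : E) 1)).toReal with hκdef
  have hκ : 0 < κ :=
    ENNReal.toReal_pos (measure_ball_pos _ _ one_pos).ne' measure_ball_lt_top.ne
  have h4l : (0:ℝ) < (4:ℝ) ^ (2 * lam) := Real.rpow_pos_of_pos (by norm_num) _
  have h2l : (0:ℝ) < (2:ℝ) ^ (2 * lam) := Real.rpow_pos_of_pos (by norm_num) _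
  refine ⟨κ / (2 * 4 ^ (2 * lam) * 4 ^ (n + 1)), κ * 2 ^ (2 * lam),
    by positivity, by positivity, ?_⟩
  intro x hx r hr
  set a : ℝ := x (Fin.last n) with ha
  have hH : MeasurableSet {y : E | 0 < y (Fin.last n)} :=
    measurableSet_lt measurable_const besselAux_meas_coord
  have hS : MeasurableSet (ball x r ∩ {y : E | 0 < y (Fin.last n)}) :=
    measurableSet_ball.inter hH
  have hsub : (ball x r ∩ {y : E | 0 < y (Fin.last n)}) ⊆ {y : E | 0 < y (Fin.last n)} :=
    Set.inter_subset_right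
  have hrn : r ^ ((n : ℝ) + 1) = r ^ (n + 1) := by
    rw [show ((n : ℝ) + 1) = ((n + 1 : ℕ) : ℝ) by push_cast; ring, Real.rpow_natCast]
  have hrn2 : r ^ ((n : ℝ) + 1 + 2 * lam) = r ^ (n + 1) * r ^ (2 * lam) := by
    rw [Real.rpow_add hr, hrn]
  rw [hrn, hrn2]
  constructor
  · -- lower bound
    rcases le_or_gt r a with hcase | hcase
    · -- r ≤ a : use ball x (r/2), bound a/2
      have hball : ball x (r / 2) ⊆ ball x r ∩ {y : E | 0 < y (Fin.last n)} := by
        intro y hy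
        have hd := (besselAux_coord_le y x (Fin.last n)).trans_lt (mem_ball.mp hy)
        rw [Real.dist_eq, abs_lt] at hd
        refine ⟨ball_subset_ball (by linarith) hy, ?_⟩
        show 0 < y (Fin.last n)
        linarith [hd.1]
      have hcoord : ∀ y ∈ ball x (r / 2), a / 2 ≤ y (Fin.last n) := by
        intro y hy
        have hd := (besselAux_coord_le y x (Fin.last n)).trans_lt (mem_ball.mp hy)
        rw [Real.dist_eq, abs_lt] at hd
        linarith [hd.1]
      refine le_trans (ENNReal.ofReal_le_ofReal ?_)
        (besselAux_lower lam hlam.le hS hsub x (by linarith) (by linarith) hball hcoord)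
      have hra : r ^ (2 * lam) ≤ a ^ (2 * lam) :=
        Real.rpow_le_rpow hr.le hcase (by positivity)
      calc κ / (2 * 4 ^ (2 * lam) * 4 ^ (n + 1)) *
            (r ^ (n + 1) * a ^ (2 * lam) + r ^ (n + 1) * r ^ (2 * lam))
          ≤ κ / (2 * 4 ^ (2 * lam) * 4 ^ (n + 1)) *
            (r ^ (n + 1) * a ^ (2 * lam) + r ^ (n + 1) * a ^ (2 * lam)) := by gcongr
        _ = κ * (r ^ (n + 1) * a ^ (2 * lam)) / (4 ^ (2 * lam) * 4 ^ (n + 1)) := by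
            field_simp
            ring
        _ ≤ κ * (r ^ (n + 1) * a ^ (2 * lam)) / (2 ^ (2 * lam) * 2 ^ (n + 1)) := by
            have hden : (2:ℝ) ^ (2 * lam) * 2 ^ (n + 1) ≤ 4 ^ (2 * lam) * 4 ^ (n + 1) := by
              have h1 : (2:ℝ) ^ (2 * lam) ≤ 4 ^ (2 * lam) :=
                Real.rpow_le_rpow (by norm_num) (by norm_num) (by positivity)
              have h2 : (2:ℝ) ^ (n + 1) ≤ 4 ^ (n + 1) :=
                pow_le_pow_left₀ (by norm_num) (by norm_num) _
              have h3 : (0:ℝ) < 2 ^ (n + 1) := by positivity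
              nlinarith
            rw [div_le_div_iff₀ (by positivity) (by positivity)]
            exact mul_le_mul_of_nonneg_left hden (by positivity)
        _ = (a / 2) ^ (2 * lam) * ((r / 2) ^ (n + 1) * κ) := by
            rw [Real.div_rpow hx.le (by norm_num), div_pow]
            field_simp
    · -- a < r : shifted ball
      set z : E := x + (r / 2) • EuclideanSpace.single (Fin.last n) (1:ℝ) with hz
      have hzc : z (Fin.last n) = a + r / 2 := by
        simp [hz, EuclideanSpace.single_apply, ha]
      have hdzx : dist z x = r / 2 := by
        rw [hz, dist_eq_norm, add_sub_cancel_left, norm_smul,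
          EuclideanSpace.norm_single, norm_one, mul_one, Real.norm_eq_abs,
          abs_of_pos (by linarith)]
      have hball : ball z (r / 4) ⊆ ball x r ∩ {y : E | 0 < y (Fin.last n)} := by
        intro y hy
        have hyz := mem_ball.mp hy
        have hd := (besselAux_coord_le y z (Fin.last n)).trans_lt hyz
        rw [Real.dist_eq, abs_lt] at hd
        constructor
        · have : dist y x ≤ dist y z + dist z x := dist_triangle y z x
          rw [mem_ball]
          linarith [hdzx ▸ this]
        · show 0 < y (Fin.last n)
          have := hd.1
          rw [hzc] at this
          linarith
      have hcoord : ∀ y ∈ ball z (r / 4), r / 4 ≤ y (Fin.last n) := by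
        intro y hy
        have hd := (besselAux_coord_le y z (Fin.last n)).trans_lt (mem_ball.mp hy)
        rw [Real.dist_eq, abs_lt] at hd
        have := hd.1
        rw [hzc] at this
        linarith
      refine le_trans (ENNReal.ofReal_le_ofReal ?_)
        (besselAux_lower lam hlam.le hS hsub z (by linarith) (by linarith) hball hcoord)
      have hra : a ^ (2 * lam) ≤ r ^ (2 * lam) :=
        Real.rpow_le_rpow hx.le hcase.le (by positivity)
      calc κ / (2 * 4 ^ (2 * lam) * 4 ^ (n + 1)) *
            (r ^ (n + 1) * a ^ (2 * lam) + r ^ (n + 1) * r ^ (2 * lam))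
          ≤ κ / (2 * 4 ^ (2 * lam) * 4 ^ (n + 1)) *
            (r ^ (n + 1) * r ^ (2 * lam) + r ^ (n + 1) * r ^ (2 * lam)) := by gcongr
        _ = (r / 4) ^ (2 * lam) * ((r / 4) ^ (n + 1) * κ) := by
            rw [Real.div_rpow hr.le (by norm_num), div_pow]
            field_simp
            ring
  · -- upper bound
    rw [besselAux_apply lam hS hsub]
    have hbound : ∀ y ∈ ball x r ∩ {y : E | 0 < y (Fin.last n)},
        ENNReal.ofReal (y (Fin.last n) ^ (2 * lam)) ≤ ENNReal.ofReal ((a + r) ^ (2 * lam)) := by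
      intro y hy
      have hd := (besselAux_coord_le y x (Fin.last n)).trans_lt (mem_ball.mp hy.1)
      rw [Real.dist_eq, abs_lt] at hd
      exact ENNReal.ofReal_le_ofReal
        (Real.rpow_le_rpow (le_of_lt hy.2) (by linarith [hd.2]) (by positivity))
    have key : (a + r) ^ (2 * lam) ≤ 2 ^ (2 * lam) * (a ^ (2 * lam) + r ^ (2 * lam)) := by
      rcases le_total a r with h | h
      · calc (a + r) ^ (2 * lam) ≤ (2 * r) ^ (2 * lam) :=
              Real.rpow_le_rpow (by positivity) (by linarith) (by positivity)
          _ = 2 ^ (2 * lam) * r ^ (2 * lam) := Real.mul_rpow (by norm_num) hr.le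
          _ ≤ 2 ^ (2 * lam) * (a ^ (2 * lam) + r ^ (2 * lam)) := by
              have := Real.rpow_nonneg hx.le (2 * lam)
              nlinarith
      · calc (a + r) ^ (2 * lam) ≤ (2 * a) ^ (2 * lam) :=
              Real.rpow_le_rpow (by positivity) (by linarith) (by positivity)
          _ = 2 ^ (2 * lam) * a ^ (2 * lam) := Real.mul_rpow (by norm_num) hx.le
          _ ≤ 2 ^ (2 * lam) * (a ^ (2 * lam) + r ^ (2 * lam)) := by
              have := Real.rpow_nonneg hr.le (2 * lam)
              nlinarith
    calc ∫⁻ y in ball x r ∩ {y : E | 0 < y (Fin.last n)},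
            ENNReal.ofReal (y (Fin.last n) ^ (2 * lam)) ∂volume
        ≤ ∫⁻ _ in ball x r ∩ {y : E | 0 < y (Fin.last n)},
            ENNReal.ofReal ((a + r) ^ (2 * lam)) ∂volume :=
          setLIntegral_mono measurable_const hbound
      _ = ENNReal.ofReal ((a + r) ^ (2 * lam)) *
            volume (ball x r ∩ {y : E | 0 < y (Fin.last n)}) := setLIntegral_const _ _
      _ ≤ ENNReal.ofReal ((a + r) ^ (2 * lam)) * volume (ball x r) := by
          exact mul_le_mul_right (measure_mono Set.inter_subset_left) _
      _ = ENNReal.ofReal ((a + r) ^ (2 * lam) * (r ^ (n + 1) * κ)) := by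
          rw [besselAux_volume_ball x hr.le, ← ENNReal.ofReal_mul (by positivity)]
      _ ≤ ENNReal.ofReal (κ * 2 ^ (2 * lam) *
            (r ^ (n + 1) * a ^ (2 * lam) + r ^ (n + 1) * r ^ (2 * lam))) := by
          apply ENNReal.ofReal_le_ofReal
          calc (a + r) ^ (2 * lam) * (r ^ (n + 1) * κ)
              ≤ (2 ^ (2 * lam) * (a ^ (2 * lam) + r ^ (2 * lam))) * (r ^ (n + 1) * κ) :=
                mul_le_mul_of_nonneg_right key (by positivity)
            _ = κ * 2 ^ (2 * lam) *
                (r ^ (n + 1) * a ^ (2 * lam) + r ^ (n + 1) * r ^ (2 * lam)) := by ring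
end

section
/- Let 0 < p ≤ n+1, 0 < q < ∞, and c, v > 0. Consider the sequence indexed by pairs (k, i) with k > N an integer and 1 ≤ i ≤ ⌈c·2^{k(n+1)}⌉, whose value at (k,i) is 2^{−k} v. Then this sequence does not belong to ℓ^{p,q}; i.e., its Lorentz quasi-norm is infinite. -/
/-!
For `0 < λ < min 1 (v / 2^(N+2))` pick the dyadic scale `k > N` with
`v/(4λ) < 2^k ≤ v/(2λ)`. All of generation `k` exceeds `λ`, so the distribution function at `λ`
is at least `c 2^(k(n+1)) ≥ c (v/(4λ))^(n+1)`; as `λ ≤ 1` and `p ≤ n+1`, multiplying by `λ^p`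
leaves at least the constant `c (v/4)^(n+1)`. Hence near `0` the integrand dominates a multiple
of `1/λ`, which is not integrable there.
-/

open ENNReal MeasureTheory Set

lemma lintegral_Ioo_ofReal_inv_eq_top {ε : ℝ} (hε : 0 < ε) :
    ∫⁻ l in Ioo 0 ε, ENNReal.ofReal l⁻¹ = ⊤ := by
  have h : ¬ IntegrableOn (fun l : ℝ ↦ l⁻¹) (Ioo 0 ε) := by
    rw [← intervalIntegrable_iff_integrableOn_Ioo_of_le hε.le, intervalIntegrable_inv_iff]
    simp [hε.ne, hε.le]
  contrapose! h
  refine (lintegral_ofReal_ne_top_iff_integrable (by fun_prop) ?_).mp h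
  filter_upwards [ae_restrict_mem measurableSet_Ioo] with l hl using inv_nonneg.mpr hl.1.le

lemma lintegral_Ioi_eq_top_of_div_le {f : ℝ → ℝ≥0∞} {B : ℝ≥0∞} (hB : B ≠ 0) {ε : ℝ}
    (hε : 0 < ε) (hf : ∀ l ∈ Ioo 0 ε, B / ENNReal.ofReal l ≤ f l) :
    ∫⁻ l in Ioi 0, f l = ⊤ := by
  rw [← top_le_iff, ← ENNReal.mul_top hB, ← lintegral_Ioo_ofReal_inv_eq_top hε,
    ← lintegral_const_mul _ (by fun_prop)]
  calc ∫⁻ l in Ioo 0 ε, B * ENNReal.ofReal l⁻¹ ≤ ∫⁻ l in Ioo 0 ε, f l :=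
        setLIntegral_mono' measurableSet_Ioo fun l hl ↦ by
          rw [ENNReal.ofReal_inv_of_pos hl.1, ← div_eq_mul_inv]
          exact hf l hl
    _ ≤ ∫⁻ l in Ioi 0, f l := lintegral_mono_set Ioo_subset_Ioi_self

-- `ncard` is `0` on infinite sets, hence the finiteness hypothesis.
lemma le_ncard_setOf_of_finite {N : ℤ} {F : ℤ → ℤ} {P : ℤ → Prop}
    (hP : {k | N < k ∧ P k}.Finite) {k : ℤ} (hk : N < k) (hPk : P k) :
    F k ≤ {x : ℤ × ℕ | N < x.1 ∧ 1 ≤ x.2 ∧ (x.2 : ℤ) ≤ F x.1 ∧ P x.1}.ncard := by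
  set S := {x : ℤ × ℕ | N < x.1 ∧ 1 ≤ x.2 ∧ (x.2 : ℤ) ≤ F x.1 ∧ P x.1}
  have hS : S.Finite := by
    refine (hP.biUnion fun j _ ↦ (finite_singleton j).prod (finite_Icc 1 (F j).toNat)).subset ?_
    rintro ⟨j, i⟩ ⟨hj, hi, hiF, hPj⟩
    exact mem_biUnion ⟨hj, hPj⟩ ⟨rfl, hi, by omega⟩
  have hfiber : Prod.mk k '' Icc 1 (F k).toNat ⊆ S := by
    rintro _ ⟨i, ⟨hi, hiF⟩, rfl⟩
    exact ⟨hk, hi, show (i : ℤ) ≤ F k by omega, hPk⟩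
  have hcard := ncard_le_ncard hfiber hS
  rw [ncard_image_of_injective _ (Prod.mk_right_injective k), ← Finset.coe_Icc,
    ncard_coe_finset, Nat.card_Icc] at hcard
  omega

lemma finite_setOf_lt_zpow_neg_mul {l : ℝ} (hl : 0 < l) (N : ℤ) (v : ℝ) :
    {k : ℤ | N < k ∧ l < 2 ^ (-k) * v}.Finite := by
  obtain ⟨K, hK⟩ := pow_unbounded_of_one_lt (v / l) _root_.one_lt_two
  refine (finite_Ioo N K).subset fun k ⟨hNk, hk⟩ ↦ ⟨hNk, ?_⟩
  rw [zpow_neg, lt_inv_mul_iff₀ (by positivity), ← lt_div_iff₀ hl] at hk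
  exact (zpow_lt_zpow_iff_right₀ _root_.one_lt_two).mp (hk.trans (by simpa using hK))

lemma exists_dyadic_scale {l v : ℝ} (hl : 0 < l) {N : ℤ} (hlN : l < v / 2 ^ (N + 2)) :
    ∃ k : ℤ, N < k ∧ l < 2 ^ (-k) * v ∧ v / (4 * l) < 2 ^ k := by
  have hv : 0 < v := (div_pos_iff_of_pos_right (by positivity)).mp (hl.trans hlN)
  obtain ⟨k, hk, hk1⟩ :=
    exists_mem_Ico_zpow (div_pos hv (mul_pos two_pos hl)) _root_.one_lt_two
  rw [zpow_add_one₀ two_ne_zero] at hk1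
  have h2k : (0 : ℝ) < 2 ^ k := by positivity
  refine ⟨k, ?_, ?_, ?_⟩
  · rw [lt_div_iff₀ (by positivity), zpow_add₀ two_ne_zero] at hlN
    rw [div_lt_iff₀ (by positivity)] at hk1
    have h : (2 : ℝ) ^ N < 2 ^ k := by nlinarith
    exact (zpow_lt_zpow_iff_right₀ (a := (2 : ℝ)) _root_.one_lt_two).mp h
  · rw [zpow_neg, lt_inv_mul_iff₀ h2k]
    rw [le_div_iff₀ (by positivity)] at hk
    nlinarith
  · rw [div_lt_iff₀ (by positivity)]
    rw [div_lt_iff₀ (by positivity)] at hk1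
    linarith

lemma le_rpow_mul_div_pow {a l p : ℝ} {m : ℕ} (ha : 0 ≤ a) (hl₀ : 0 < l) (hl₁ : l ≤ 1)
    (hp : p ≤ m) : a ≤ l ^ p * (a / l ^ m) := by
  have hlm : l ^ m ≤ l ^ p := by
    simpa using Real.rpow_le_rpow_of_exponent_ge hl₀ hl₁ hp
  calc a = l ^ m * (a / l ^ m) := by field_simp
    _ ≤ l ^ p * (a / l ^ m) := by gcongr

lemma ofReal_le_rpow_mul_ncard (n : ℕ) {p c v l : ℝ} (hp : p ≤ (n : ℝ) + 1) (hc : 0 < c)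
    (N : ℤ) (hl₀ : 0 < l) (hl₁ : l ≤ 1) (hlN : l < v / 2 ^ (N + 2)) :
    ENNReal.ofReal (c * (v / 4) ^ (n + 1)) ≤
      ENNReal.ofReal (l ^ p) *
        (Set.ncard {x : ℤ × ℕ | N < x.1 ∧ 1 ≤ x.2 ∧
          (x.2 : ℤ) ≤ ⌈c * (2 : ℝ) ^ (x.1 * ((n : ℤ) + 1))⌉ ∧
          l < (2 : ℝ) ^ (-x.1) * v} : ℝ≥0∞) := by
  obtain ⟨k, hNk, hlk, hk⟩ := exists_dyadic_scale hl₀ hlN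
  have hv : 0 < v := (div_pos_iff_of_pos_right (by positivity)).mp (hl₀.trans hlN)
  have hcount :=
    le_ncard_setOf_of_finite (F := fun k ↦ ⌈c * (2 : ℝ) ^ (k * ((n : ℤ) + 1))⌉)
      (finite_setOf_lt_zpow_neg_mul hl₀ N v) hNk hlk
  have hdensity :
      c * (v / 4) ^ (n + 1) / l ^ (n + 1) ≤ ⌈c * (2 : ℝ) ^ (k * ((n : ℤ) + 1))⌉ :=
    calc c * (v / 4) ^ (n + 1) / l ^ (n + 1) = c * (v / (4 * l)) ^ (n + 1) := by
          rw [mul_div_assoc, ← div_pow, div_div]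
      _ ≤ c * ((2 : ℝ) ^ k) ^ (n + 1) := by gcongr
      _ = c * (2 : ℝ) ^ (k * ((n : ℤ) + 1)) := by rw [zpow_mul]; norm_cast
      _ ≤ _ := Int.le_ceil _
  rw [← ENNReal.ofReal_natCast, ← ENNReal.ofReal_mul (by positivity)]
  refine ENNReal.ofReal_le_ofReal ((le_rpow_mul_div_pow (by positivity) hl₀ hl₁
    (m := n + 1) (by exact_mod_cast hp)).trans ?_)
  gcongr
  exact hdensity.trans (by exact_mod_cast hcount)

/-- for `0 < p ≤ n+1`, `0 < q < ∞` and `c, v > 0`, the sequence indexed by pairs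
`(k, i)` with `k > N` and `1 ≤ i ≤ ⌈c 2^{k(n+1)}⌉`, taking the value `2^{-k} v` at `(k,i)`,
does not lie in `ℓ^{p,q}`: its Lorentz quasi-norm integral diverges. -/
theorem stmt10 (n : ℕ) (p q c v : ℝ) (hp0 : 0 < p) (hp : p ≤ (n : ℝ) + 1) (hq : 0 < q)
    (hc : 0 < c) (hv : 0 < v) (N : ℤ) :
    ∫⁻ l in Set.Ioi (0 : ℝ),
        (ENNReal.ofReal (l ^ p) *
            (Set.ncard {x : ℤ × ℕ | N < x.1 ∧ 1 ≤ x.2 ∧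
                (x.2 : ℤ) ≤ ⌈c * (2 : ℝ) ^ (x.1 * ((n : ℤ) + 1))⌉ ∧
                l < (2 : ℝ) ^ (-x.1) * v} : ℝ≥0∞)) ^ (q / p) /
          ENNReal.ofReal l = ⊤ := by
  refine lintegral_Ioi_eq_top_of_div_le (B := ENNReal.ofReal (c * (v / 4) ^ (n + 1)) ^ (q / p))
    (ε := min 1 (v / 2 ^ (N + 2))) ?_ (by positivity) fun l ⟨hl₀, hlε⟩ ↦ ?_
  · exact (ENNReal.rpow_pos (by positivity) ofReal_ne_top).ne'
  · gcongr
    exact ofReal_le_rpow_mul_ncard n hp hc N hl₀ (hlε.le.trans (min_le_left _ _))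
      (hlε.trans_le (min_le_right _ _))
end

section
/- Let 0 < p < n+1 and c, v > 0. The sequence indexed by pairs (k,i), k > N, 1 ≤ i ≤ ⌈c·2^{k(n+1)}⌉, with value 2^{−k}v at (k,i), does not belong to weak-ℓ^p (= ℓ^{p,∞}): sup_{λ>0} λ · (#{(k,i) : 2^{−k}v > λ})^{1/p} = +∞. -/
open ENNReal Filter Topology

/-!
At level `λ = 2^{-(K+1)} v` the superlevel set consists of the blocks `N < k ≤ K`, so it is finite
and contains the whole `K`-th block, of size at least `c 2^{K(n+1)}`. Hence
`λ (#{a > λ})^{1/p} ≥ (v c^{1/p} / 2) 2^{K((n+1)/p - 1)}`, which tends to `∞` as `K → ∞`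
because `p < n + 1`.
-/

def superlevelSet (n : ℕ) (c v : ℝ) (N : ℤ) (l : ℝ) : Set (ℤ × ℕ) :=
  {x : ℤ × ℕ | N < x.1 ∧ 1 ≤ x.2 ∧ (x.2 : ℤ) ≤ ⌈c * (2 : ℝ) ^ (x.1 * ((n : ℤ) + 1))⌉ ∧
    l < (2 : ℝ) ^ (-x.1) * v}

section

variable {n : ℕ} {p c v : ℝ} {N K : ℤ}

lemma two_zpow_neg_succ_mul_lt_iff (hv : 0 < v) {k : ℤ} :
    (2 : ℝ) ^ (-(K + 1)) * v < (2 : ℝ) ^ (-k) * v ↔ k ≤ K := by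
  rw [mul_lt_mul_iff_of_pos_right hv, zpow_lt_zpow_iff_right₀ _root_.one_lt_two]
  omega

lemma superlevelSet_subset (hc : 0 ≤ c) (hv : 0 < v) :
    superlevelSet n c v N ((2 : ℝ) ^ (-(K + 1)) * v) ⊆
      Set.Icc (N + 1) K ×ˢ Set.Icc 1 ⌈c * (2 : ℝ) ^ (K * ((n : ℤ) + 1))⌉.toNat := by
  rintro ⟨k, i⟩ ⟨hNk, hi, hic, hl⟩
  have hkK : k ≤ K := (two_zpow_neg_succ_mul_lt_iff hv).1 hl
  have hceil : ⌈c * (2 : ℝ) ^ (k * ((n : ℤ) + 1))⌉ ≤ ⌈c * (2 : ℝ) ^ (K * ((n : ℤ) + 1))⌉ := by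
    gcongr
    exact one_le_two
  exact ⟨⟨hNk, hkK⟩, hi, by dsimp only at hic; omega⟩

lemma superlevelSet_finite (hc : 0 ≤ c) (hv : 0 < v) :
    (superlevelSet n c v N ((2 : ℝ) ^ (-(K + 1)) * v)).Finite :=
  ((Set.finite_Icc _ _).prod (Set.finite_Icc _ _)).subset (superlevelSet_subset hc hv)

lemma singleton_prod_subset_superlevelSet (hv : 0 < v) (hNK : N < K) :
    {K} ×ˢ Set.Icc 1 ⌈c * (2 : ℝ) ^ (K * ((n : ℤ) + 1))⌉.toNat ⊆
      superlevelSet n c v N ((2 : ℝ) ^ (-(K + 1)) * v) := by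
  rintro ⟨k, i⟩ ⟨rfl, hi1, hi2⟩
  exact ⟨hNK, hi1, by omega, (two_zpow_neg_succ_mul_lt_iff hv).2 le_rfl⟩

lemma ceil_toNat_le_ncard_superlevelSet (hc : 0 ≤ c) (hv : 0 < v) (hNK : N < K) :
    ⌈c * (2 : ℝ) ^ (K * ((n : ℤ) + 1))⌉.toNat ≤
      (superlevelSet n c v N ((2 : ℝ) ^ (-(K + 1)) * v)).ncard := by
  have h := Set.ncard_le_ncard (singleton_prod_subset_superlevelSet (c := c) (n := n) hv hNK)
    (superlevelSet_finite hc hv) -- `Set.ncard` is `0` on infinite sets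
  simpa [Set.ncard_prod] using h

lemma two_zpow_neg_succ_mul_rpow_eq (hc : 0 ≤ c) :
    (2 : ℝ) ^ (-(K + 1)) * (c * (2 : ℝ) ^ (K * ((n : ℤ) + 1))) ^ (1 / p) =
      c ^ (1 / p) / 2 * (2 : ℝ) ^ ((((n : ℝ) + 1) / p - 1) * K) := by
  rw [Real.mul_rpow hc (by positivity), ← Real.rpow_intCast, ← Real.rpow_intCast,
    ← Real.rpow_mul zero_le_two, mul_left_comm, ← Real.rpow_add two_pos]
  have : (((-(K + 1) : ℤ) : ℝ) + ((K * ((n : ℤ) + 1) : ℤ) : ℝ) * (1 / p)) =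
      (((n : ℝ) + 1) / p - 1) * K + (-1) := by
    push_cast
    ring
  rw [this, Real.rpow_add two_pos, Real.rpow_neg_one]
  ring

lemma tendsto_two_zpow_neg_succ_mul_rpow_atTop (hp0 : 0 < p) (hp : p < (n : ℝ) + 1)
    (hc : 0 < c) (hv : 0 < v) :
    Tendsto (fun K : ℤ =>
      (2 : ℝ) ^ (-(K + 1)) * v * (c * (2 : ℝ) ^ (K * ((n : ℤ) + 1))) ^ (1 / p)) atTop atTop := by
  have hδ : 0 < ((n : ℝ) + 1) / p - 1 := sub_pos.2 ((one_lt_div hp0).2 hp)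
  have h2δK : Tendsto (fun K : ℤ => (2 : ℝ) ^ ((((n : ℝ) + 1) / p - 1) * K)) atTop atTop :=
    (tendsto_rpow_atTop_of_base_gt_one 2 one_lt_two).comp
      (tendsto_intCast_atTop_atTop.const_mul_atTop hδ)
  refine (h2δK.const_mul_atTop (by positivity : 0 < v * (c ^ (1 / p) / 2))).congr fun K => ?_
  rw [mul_right_comm _ v, two_zpow_neg_succ_mul_rpow_eq hc.le]
  ring

lemma ofReal_le_ofReal_mul_ncard_superlevelSet_rpow (hp0 : 0 < p) (hc : 0 < c)
    (hv : 0 < v) (hNK : N < K) :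
    ENNReal.ofReal ((2 : ℝ) ^ (-(K + 1)) * v * (c * (2 : ℝ) ^ (K * ((n : ℤ) + 1))) ^ (1 / p)) ≤
      ENNReal.ofReal ((2 : ℝ) ^ (-(K + 1)) * v) *
        ((superlevelSet n c v N ((2 : ℝ) ^ (-(K + 1)) * v)).ncard : ℝ≥0∞) ^ (1 / p) := by
  rw [ENNReal.ofReal_mul (by positivity), ← ENNReal.ofReal_rpow_of_pos (by positivity)]
  gcongr
  calc ENNReal.ofReal (c * (2 : ℝ) ^ (K * ((n : ℤ) + 1)))
      ≤ (⌈c * (2 : ℝ) ^ (K * ((n : ℤ) + 1))⌉.toNat : ℝ≥0∞) := by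
        rw [Int.ceil_toNat]
        exact ENNReal.ofReal_le_of_le_toReal (by simpa using Nat.le_ceil _)
    _ ≤ _ := Nat.cast_le.2 (ceil_toNat_le_ncard_superlevelSet hc.le hv hNK)

end

/-- for `0 < p < n+1` and `c, v > 0`, the sequence indexed by pairs `(k, i)` with
`k > N` and `1 ≤ i ≤ ⌈c 2^{k(n+1)}⌉`, taking the value `2^{-k} v` at `(k,i)`, does not lie in
weak-`ℓ^p`: `sup_{λ>0} λ (#{(k,i) : 2^{-k}v > λ})^{1/p} = ∞`. -/
theorem stmt11 (n : ℕ) (p c v : ℝ) (hp0 : 0 < p) (hp : p < (n : ℝ) + 1)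
    (hc : 0 < c) (hv : 0 < v) (N : ℤ) :
    (⨆ (l : ℝ) (_ : 0 < l),
        ENNReal.ofReal l *
          (Set.ncard {x : ℤ × ℕ | N < x.1 ∧ 1 ≤ x.2 ∧
              (x.2 : ℤ) ≤ ⌈c * (2 : ℝ) ^ (x.1 * ((n : ℤ) + 1))⌉ ∧
              l < (2 : ℝ) ^ (-x.1) * v} : ℝ≥0∞) ^ (1 / p)) = ⊤ := by
  refine top_unique (le_of_tendsto
    (tendsto_ofReal_atTop.comp (tendsto_two_zpow_neg_succ_mul_rpow_atTop hp0 hp hc hv)) ?_)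
  filter_upwards [eventually_gt_atTop N] with K hNK
  exact (ofReal_le_ofReal_mul_ncard_superlevelSet_rpow hp0 hc hv hNK).trans
    (le_iSup₂_of_le _ (by positivity) le_rfl)
end

section
/- Let n ≥ 0, λ > 0 and p > n+1. Let x₀ = (0,…,0,x_{0,n+1}) ∈ R_+^{n+1} with x_{0,n+1} large, and let f be a smooth cut-off function supported in B(x₀,1) (f nontrivial). Then f belongs to the weighted Besov space B_p(R_+^{n+1}, dm_λ); that is, ∫∫_{R_+^{n+1}×R_+^{n+1}} |f(x)−f(y)|^p / m_λ(B_{R_+^{n+1}}(x,|x−y|))² dm_λ(y) dm_λ(x) < ∞. -/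
open MeasureTheory Metric ENNReal

open Finset Set

abbrev El (n : ℕ) := EuclideanSpace ℝ (Fin (n+1))

theorem coord_abs_le_norm {n : ℕ} (v : El n) (i : Fin (n+1)) : |v i| ≤ ‖v‖ := by
  rw [EuclideanSpace.norm_eq]
  refine (Real.le_sqrt (abs_nonneg _) (by positivity)).mpr ?_
  rw [sq_abs]
  have h : v i ^ 2 = ‖v i‖ ^ 2 := by simp [Real.norm_eq_abs, sq_abs]
  rw [h]
  exact Finset.single_le_sum (f := fun j => ‖v j‖ ^ 2) (fun j _ => by positivity) (mem_univ i)

theorem bessel_lint (n : ℕ) (lam : ℝ) (g : (El n) → ℝ≥0∞) :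
    ∫⁻ x, g x ∂(besselMeasure n lam) =
      ∫⁻ x in {x : El n | 0 < x (Fin.last n)},
        ENNReal.ofReal ((x (Fin.last n)) ^ (2*lam)) * g x ∂volume := by
  rw [besselMeasure, lintegral_withDensity_eq_lintegral_mul_non_measurable _ (by fun_prop)
      (Filter.Eventually.of_forall fun x => ofReal_lt_top)]
  rfl

theorem bessel_apply (n : ℕ) (lam : ℝ) {A : Set (El n)} (hA : MeasurableSet A) :
    besselMeasure n lam A =
      ∫⁻ x in A ∩ {x : El n | 0 < x (Fin.last n)},
        ENNReal.ofReal ((x (Fin.last n)) ^ (2*lam)) ∂volume := by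
  have hH : MeasurableSet {x : El n | 0 < x (Fin.last n)} := by
    have : Measurable fun x : El n => x (Fin.last n) := by fun_prop
    exact measurableSet_lt measurable_const this
  rw [besselMeasure, withDensity_apply _ hA, Measure.restrict_restrict hA]

theorem lemA (n : ℕ) {lam : ℝ} (hlam : 0 < lam) (x : El n) (hx : 0 < x (Fin.last n))
    {r : ℝ} (hr : 0 < r) :
    ENNReal.ofReal (((volume (ball (0:El n) 1)).toReal * (4:ℝ) ^ (-(((n:ℝ)+1) + 2*lam))) *
        (r ^ ((n:ℝ)+1) * (max (x (Fin.last n)) r) ^ (2*lam)))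
      ≤ besselMeasure n lam (ball x r ∩ {z : El n | 0 < z (Fin.last n)}) := by
  set i := Fin.last n
  set q := 2*lam with hqdef
  have hq : 0 < q := by positivity
  set M := max (x i) r with hM
  have hM0 : 0 < M := lt_max_of_lt_left hx
  set e : El n := EuclideanSpace.single i (1:ℝ) with he
  set x' : El n := x + (r/2) • e with hx'
  have hx'i : x' i = x i + r/2 := by simp [hx', he, EuclideanSpace.single_apply]
  have hsub : ball x' (r/4) ⊆ ball x r ∩ {z : El n | 0 < z i} := by
    intro z hz
    rw [mem_ball] at hz
    have hzx' : |z i - x' i| ≤ dist z x' := by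
      have := coord_abs_le_norm (z - x') i
      simpa [dist_eq_norm] using this
    constructor
    · rw [mem_ball]
      have hd : dist x' x = r/2 := by
        rw [hx', dist_self_add_left, norm_smul]
        simp [he, EuclideanSpace.norm_single, abs_of_pos hr]
      calc dist z x ≤ dist z x' + dist x' x := dist_triangle _ _ _
        _ < r/4 + r/2 := by linarith [hz]
        _ < r := by linarith
    · have : z i > x' i - r/4 := by
        have := abs_sub_lt_iff.mp (lt_of_le_of_lt hzx' hz)
        linarith [this.2]
      simp only [Set.mem_setOf_eq]
      rw [hx'i] at this
      linarith
  have hlow : ∀ z ∈ ball x' (r/4), M/4 ≤ z i := by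
    intro z hz
    rw [mem_ball] at hz
    have hzx' : |z i - x' i| ≤ dist z x' := by
      have := coord_abs_le_norm (z - x') i
      simpa [dist_eq_norm] using this
    have h1 : z i > x i + r/4 := by
      have := abs_sub_lt_iff.mp (lt_of_le_of_lt hzx' hz)
      rw [hx'i] at this
      linarith [this.2]
    have hMle : M ≤ x i + r := max_le (by linarith) (by linarith)
    have : M/4 ≤ x i + r/4 := by linarith
    linarith
  have hball : ball x' (r/4) ⊆ {z : El n | 0 < z i} := fun z hz => (hsub hz).2
  have hmono := measure_mono (μ := besselMeasure n lam) hsub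
  refine le_trans ?_ hmono
  rw [bessel_apply n lam measurableSet_ball, Set.inter_eq_left.mpr hball]
  have hconst : ENNReal.ofReal ((M/4) ^ q) * volume (ball x' (r/4))
      ≤ ∫⁻ z in ball x' (r/4), ENNReal.ofReal ((z i) ^ q) ∂volume := by
    rw [← setLIntegral_const]
    refine setLIntegral_mono (by fun_prop) fun z hz => ?_
    exact ENNReal.ofReal_le_ofReal
      (Real.rpow_le_rpow (by positivity) (hlow z hz) hq.le)
  refine le_trans ?_ hconst
  rw [Measure.addHaar_ball volume x' (by positivity : (0:ℝ) ≤ r/4)]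
  have hfr : Module.finrank ℝ (El n) = n + 1 := by simp
  rw [hfr]
  set Vu : ℝ := (volume (ball (0:El n) 1)).toReal with hVu
  have hvol : volume (ball (0 : El n) 1) = ENNReal.ofReal Vu :=
    (ENNReal.ofReal_toReal measure_ball_lt_top.ne).symm
  have hVu0 : 0 ≤ Vu := ENNReal.toReal_nonneg
  rw [hvol, ← mul_assoc, ← ENNReal.ofReal_mul (by positivity), ← ENNReal.ofReal_mul (by positivity)]
  refine ENNReal.ofReal_le_ofReal ?_
  -- real inequality
  have h4 : ((r/4) ^ (n+1) : ℝ) = r ^ ((n:ℝ)+1) * ((4:ℝ)^((n:ℝ)+1))⁻¹ := by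
    rw [← Real.rpow_natCast (r/4) (n+1), Real.div_rpow hr.le (by norm_num)]
    push_cast
    ring
  have hMq : ((M/4) ^ q : ℝ) = M ^ q * ((4:ℝ)^q)⁻¹ := by
    rw [Real.div_rpow hM0.le (by norm_num)]
    ring
  rw [h4, hMq]
  have h44 : (4:ℝ) ^ (-((((n:ℝ)+1)) + q)) = ((4:ℝ)^((n:ℝ)+1))⁻¹ * ((4:ℝ)^q)⁻¹ := by
    rw [Real.rpow_neg (by norm_num), Real.rpow_add (by norm_num), mul_inv]
  rw [h44]
  exact le_of_eq (by ring)

theorem shell_int (n : ℕ) {e : ℝ} (he : -(((n:ℝ))+1) < e) {b : ℝ} (hb : 0 < b) :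
    ∫⁻ u in ball (0 : El n) b, ENNReal.ofReal (‖u‖ ^ e) ∂volume < ⊤ := by
  set dd : ℝ := (n:ℝ)+1 with hdd
  set s : ℝ := (1/2 : ℝ) with hs
  have hs0 : (0:ℝ) < s := by norm_num
  have hs1 : s < 1 := by norm_num
  set A : ℕ → Set (El n) := fun k =>
    closedBall (0 : El n) (b * s^k) ∩ {u : El n | b * s^(k+1) ≤ ‖u‖} with hA
  have hAm : ∀ k, MeasurableSet (A k) := fun k =>
    measurableSet_closedBall.inter (measurableSet_le measurable_const measurable_norm)
  have hcover : ball (0 : El n) b ⊆ {0} ∪ ⋃ k, A k := by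
    intro u hu
    rw [mem_ball, dist_zero_right] at hu
    by_cases h0 : u = 0
    · exact Or.inl h0
    · right
      have hun : 0 < ‖u‖ := norm_pos_iff.mpr h0
      have hex : ∃ m : ℕ, b * s^(m+1) < ‖u‖ := by
        obtain ⟨m, hm⟩ := exists_pow_lt_of_lt_one (div_pos hun hb) hs1
        have hmb : s^m * b < ‖u‖ := (lt_div_iff₀ hb).mp hm
        exact ⟨m, by rw [pow_succ]; nlinarith [pow_pos hs0 m]⟩
      classical
      set k := Nat.find hex with hk
      have h1 : b * s^(k+1) < ‖u‖ := Nat.find_spec hex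
      have h2 : ‖u‖ ≤ b * s^k := by
        rcases Nat.eq_zero_or_pos k with h | h
        · rw [h]; simpa using hu.le
        · have := Nat.find_min hex (m := k - 1) (by omega)
          push_neg at this
          have hk1 : k - 1 + 1 = k := by omega
          rwa [hk1] at this
      exact mem_iUnion.mpr ⟨k, ⟨by simpa [mem_closedBall, dist_zero_right] using h2, h1.le⟩⟩
  calc ∫⁻ u in ball (0 : El n) b, ENNReal.ofReal (‖u‖ ^ e) ∂volume
      ≤ ∫⁻ u in ({0} ∪ ⋃ k, A k : Set (El n)), ENNReal.ofReal (‖u‖ ^ e) ∂volume :=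
        lintegral_mono_set hcover
    _ ≤ (∫⁻ u in ({0} : Set (El n)), ENNReal.ofReal (‖u‖ ^ e) ∂volume) +
        ∫⁻ u in (⋃ k, A k : Set (El n)), ENNReal.ofReal (‖u‖ ^ e) ∂volume :=
        lintegral_union_le _ _ _
    _ = ∫⁻ u in (⋃ k, A k : Set (El n)), ENNReal.ofReal (‖u‖ ^ e) ∂volume := by
        rw [setLIntegral_measure_zero _ _ (measure_singleton _), zero_add]
    _ ≤ ∑' k, ∫⁻ u in A k, ENNReal.ofReal (‖u‖ ^ e) ∂volume := lintegral_iUnion_le _ _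
    _ < ⊤ := by
        set mm : ℝ := max (s ^ e) 1 with hmm
        have hmm0 : 0 ≤ mm := le_trans zero_le_one (le_max_right _ _)
        have hterm : ∀ k, ∫⁻ u in A k, ENNReal.ofReal (‖u‖ ^ e) ∂volume ≤
            ENNReal.ofReal (mm * b ^ (e + dd)) * volume (ball (0:El n) 1) *
              ENNReal.ofReal ((s ^ (e + dd)) ^ k) := by
          intro k
          have hsk : (0:ℝ) < b * s^k := by positivity
          have hbound : ∀ u ∈ A k, ENNReal.ofReal (‖u‖ ^ e) ≤
              ENNReal.ofReal ((b * s^k) ^ e * mm) := by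
            intro u hu
            obtain ⟨hu1, hu2⟩ := hu
            rw [mem_closedBall, dist_zero_right] at hu1
            refine ENNReal.ofReal_le_ofReal ?_
            rcases le_or_gt 0 e with hpos | hneg
            · calc ‖u‖ ^ e ≤ (b * s^k) ^ e := Real.rpow_le_rpow (norm_nonneg u) hu1 hpos
                _ ≤ (b * s^k) ^ e * mm :=
                  le_mul_of_one_le_right (by positivity) (le_max_right _ _)
            · have hsk1 : (0:ℝ) < b * s^(k+1) := by positivity
              calc ‖u‖ ^ e ≤ (b * s^(k+1)) ^ e :=
                    Real.rpow_le_rpow_of_nonpos hsk1 hu2 hneg.le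
                _ = (b * s^k) ^ e * s ^ e := by
                    rw [pow_succ, ← mul_assoc, Real.mul_rpow (by positivity) hs0.le]
                _ ≤ (b * s^k) ^ e * mm :=
                  mul_le_mul_of_nonneg_left (le_max_left _ _) (by positivity)
          calc ∫⁻ u in A k, ENNReal.ofReal (‖u‖ ^ e) ∂volume
              ≤ ∫⁻ _ in A k, ENNReal.ofReal ((b * s^k) ^ e * mm) ∂volume :=
                setLIntegral_mono' (hAm k) hbound
            _ = ENNReal.ofReal ((b * s^k) ^ e * mm) * volume (A k) := setLIntegral_const _ _
            _ ≤ ENNReal.ofReal ((b * s^k) ^ e * mm) * volume (closedBall (0:El n) (b * s^k)) := by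
                gcongr
                exact inter_subset_left
            _ = ENNReal.ofReal (mm * b ^ (e + dd)) * volume (ball (0:El n) 1) *
                  ENNReal.ofReal ((s ^ (e + dd)) ^ k) := by
                have hfr : Module.finrank ℝ (El n) = n + 1 := by simp
                rw [Measure.addHaar_closedBall volume _ hsk.le, hfr]
                have h1 : ((b*s^k) ^ (n+1) : ℝ) = (b*s^k) ^ dd := by
                  rw [← Real.rpow_natCast (b*s^k) (n+1), hdd]
                  norm_num
                have h3 : ((b*s^k) : ℝ) ^ (e+dd) = b ^ (e+dd) * (s^(e+dd))^k := by
                  rw [Real.mul_rpow hb.le (by positivity), ← Real.rpow_natCast s k,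
                    ← Real.rpow_mul hs0.le, ← Real.rpow_natCast (s^(e+dd)) k,
                    ← Real.rpow_mul hs0.le]
                  ring_nf
                have hreal : ((b*s^k) ^ e * mm) * ((b*s^k) ^ (n+1) : ℝ) =
                    (mm * b ^ (e+dd)) * (s^(e+dd))^k := by
                  rw [h1, mul_right_comm, ← Real.rpow_add hsk, h3]
                  ring
                rw [← mul_assoc, ← ENNReal.ofReal_mul (by positivity), hreal,
                  ENNReal.ofReal_mul (by positivity)]
                ring
        have hgeo : (∑' k : ℕ, ENNReal.ofReal ((s ^ (e + dd)) ^ k)) < ⊤ := by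
          have hslt : s ^ (e + dd) < 1 :=
            Real.rpow_lt_one hs0.le hs1 (by simp only [hdd]; linarith)
          have : ∀ k : ℕ, ENNReal.ofReal ((s ^ (e + dd)) ^ k) =
              (ENNReal.ofReal (s ^ (e + dd))) ^ k := fun k =>
            by rw [← ENNReal.ofReal_pow (by positivity)]
          simp_rw [this, ENNReal.tsum_geometric]
          refine ENNReal.inv_lt_top.mpr ?_
          rw [tsub_pos_iff_lt]
          exact ENNReal.ofReal_lt_one.mpr hslt
        calc (∑' k, ∫⁻ u in A k, ENNReal.ofReal (‖u‖ ^ e) ∂volume)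
            ≤ ∑' k, ENNReal.ofReal (mm * b ^ (e + dd)) * volume (ball (0:El n) 1) *
                ENNReal.ofReal ((s ^ (e + dd)) ^ k) := ENNReal.tsum_le_tsum hterm
          _ = ENNReal.ofReal (mm * b ^ (e + dd)) * volume (ball (0:El n) 1) *
                ∑' k, ENNReal.ofReal ((s ^ (e + dd)) ^ k) := ENNReal.tsum_mul_left
          _ < ⊤ := by
              exact ENNReal.mul_lt_top (ENNReal.mul_lt_top ofReal_lt_top
                measure_ball_lt_top) hgeo

theorem J_lt_top (n : ℕ) {p : ℝ} (hp : (n:ℝ)+1 < p) :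
    ∫⁻ u : El n, ENNReal.ofReal (min ‖u‖ 6 ^ p / ‖u‖ ^ (2*((n:ℝ)+1))) ∂volume < ⊤ := by
  set dd : ℝ := (n:ℝ)+1 with hdd
  have hdd0 : 0 < dd := by positivity
  have hp0 : 0 < p := lt_trans hdd0 hp
  rw [← lintegral_add_compl (μ := volume)
    (f := fun u : El n => ENNReal.ofReal (min ‖u‖ 6 ^ p / ‖u‖ ^ (2*dd)))
    (measurableSet_ball : MeasurableSet (ball (0:El n) 6))]
  refine ENNReal.add_lt_top.mpr ⟨?_, ?_⟩
  · -- near part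
    refine lt_of_le_of_lt ?_ (shell_int n (e := p - 2*dd) (by rw [hdd]; linarith) (b := 6) (by norm_num))
    refine setLIntegral_mono' measurableSet_ball fun u hu => ?_
    rw [mem_ball, dist_zero_right] at hu
    rcases eq_or_lt_of_le (norm_nonneg u) with h0 | h0
    · rw [← h0, min_eq_left (by norm_num : (0:ℝ) ≤ 6), Real.zero_rpow hp0.ne', zero_div]
      simp
    · rw [min_eq_left hu.le, ← Real.rpow_sub h0]
  · -- far part
    have hkey : ∀ u ∈ (ball (0:El n) 6)ᶜ,
        ENNReal.ofReal (min ‖u‖ 6 ^ p / ‖u‖ ^ (2*dd)) ≤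
        ENNReal.ofReal ((6:ℝ) ^ p * (7/6) ^ (2*dd)) * ENNReal.ofReal ((1 + ‖u‖) ^ (-(2*dd))) := by
      intro u hu
      rw [mem_compl_iff, mem_ball, dist_zero_right, not_lt] at hu
      have hu0 : (0:ℝ) < ‖u‖ := by linarith
      rw [min_eq_right hu, ← ENNReal.ofReal_mul (by positivity)]
      refine ENNReal.ofReal_le_ofReal ?_
      have hB : (0:ℝ) < (1 + ‖u‖) ^ (2*dd) := by positivity
      have hcmp : (1 + ‖u‖) ^ (2*dd) ≤ (7/6) ^ (2*dd) * ‖u‖ ^ (2*dd) := by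
        rw [← Real.mul_rpow (by norm_num) hu0.le]
        exact Real.rpow_le_rpow (by positivity) (by linarith) (by positivity)
      rw [Real.rpow_neg (by positivity), ← div_eq_mul_inv,
        div_le_div_iff₀ (by positivity) hB]
      calc (6:ℝ)^p * (1 + ‖u‖) ^ (2*dd) ≤ 6^p * ((7/6) ^ (2*dd) * ‖u‖ ^ (2*dd)) :=
            mul_le_mul_of_nonneg_left hcmp (by positivity)
        _ = 6^p * (7/6)^(2*dd) * ‖u‖^(2*dd) := by ring
    refine lt_of_le_of_lt (setLIntegral_mono' measurableSet_ball.compl hkey) ?_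
    refine lt_of_le_of_lt (setLIntegral_le_lintegral _ _) ?_
    rw [lintegral_const_mul' _ _ ofReal_ne_top]
    exact ENNReal.mul_lt_top ofReal_lt_top
      (finite_integral_one_add_norm (by simpa using (by linarith : ((n:ℕ):ℝ)+1 < 2*dd)))

theorem far_int (n : ℕ) (x₀ : El n) {a : ℝ} (ha : ((n:ℝ)+1) < a) :
    ∫⁻ x : El n, ENNReal.ofReal ((1 + dist x x₀) ^ (-a)) ∂volume < ⊤ := by
  have hfin := finite_integral_one_add_norm (E := El n) (μ := volume) (r := a)
    (by simpa using ha)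
  have ht : ∫⁻ x : El n, ENNReal.ofReal ((1 + dist x x₀) ^ (-a)) ∂volume
      = ∫⁻ x : El n, ENNReal.ofReal ((1 + ‖x‖) ^ (-a)) ∂volume := by
    have := lintegral_add_right_eq_self (μ := volume)
      (fun x : El n => ENNReal.ofReal ((1 + ‖x‖) ^ (-a))) (-x₀)
    simp only [← sub_eq_add_neg] at this
    simp_rw [dist_eq_norm]
    exact this
  rw [ht]; exact hfin

theorem fbound {n : ℕ} {x₀ : El n} {f : El n → ℝ} {L : ℝ}
    (hlip : ∀ a b : El n, |f a - f b| ≤ L * dist a b) (hsupp : tsupport f ⊆ ball x₀ 1) :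
    ∀ a b : El n, |f a - f b| ≤ L * min (dist a b) 6 := by
  have hL : 0 ≤ L := by
    by_contra h
    push_neg at h
    have h1 := hlip (x₀ + (1:ℝ) • EuclideanSpace.single 0 1) x₀
    have h2 : dist (x₀ + (1:ℝ) • EuclideanSpace.single 0 1) x₀ = 1 := by
      rw [dist_self_add_left, norm_smul]
      simp [EuclideanSpace.norm_single]
    rw [h2, mul_one] at h1
    nlinarith [abs_nonneg (f (x₀ + (1:ℝ) • EuclideanSpace.single 0 1) - f x₀)]
  have habs : ∀ a : El n, |f a| ≤ 3 * L := by
    intro a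
    by_cases ha : a ∈ ball x₀ 1
    · set z : El n := a + (3:ℝ) • EuclideanSpace.single 0 1 with hz
      have hdaz : dist a z = 3 := by
        rw [dist_comm, hz, dist_self_add_left, norm_smul]
        simp [EuclideanSpace.norm_single]
      have hzball : z ∉ ball x₀ 1 := by
        rw [mem_ball]
        push_neg
        have := dist_triangle a z x₀
        have h3 : dist z x₀ ≥ dist a z - dist a x₀ := by
          have := dist_triangle a x₀ z
          rw [dist_comm z x₀]
          linarith [dist_comm a z ▸ this]
        rw [mem_ball] at ha
        rw [hdaz] at h3
        linarith
      have hfz : f z = 0 := image_eq_zero_of_notMem_tsupport (fun h => hzball (hsupp h))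
      have := hlip a z
      rw [hfz, sub_zero, hdaz] at this
      linarith
    · have hfa : f a = 0 := image_eq_zero_of_notMem_tsupport (fun h => ha (hsupp h))
      rw [hfa, abs_zero]
      positivity
  intro a b
  rcases le_total (dist a b) 6 with h | h
  · rw [min_eq_left h]; exact hlip a b
  · rw [min_eq_right h]
    calc |f a - f b| ≤ |f a| + |f b| := abs_sub _ _
      _ ≤ L * 6 := by nlinarith [habs a, habs b]

set_option maxHeartbeats 2000000

/-- for `p > n+1`, any smooth cut-off function supported in the unit ball around
a point `x₀ = (0,…,0,x_{0,n+1})` with `x_{0,n+1}` sufficiently large belongs to the weighted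
Besov space `B_p(ℝ₊^{n+1}, dm_λ)`:
`∫∫ |f(x)-f(y)|^p / m_λ(B_{ℝ₊^{n+1}}(x,|x-y|))² dm_λ(y) dm_λ(x) < ∞`. -/
theorem stmt12 (n : ℕ) (lam p : ℝ) (hlam : 0 < lam) (hp : (n : ℝ) + 1 < p) :
    ∃ R : ℝ, 0 < R ∧
      ∀ x₀ : EuclideanSpace ℝ (Fin (n + 1)),
        (∀ j, j ≠ Fin.last n → x₀ j = 0) → R ≤ x₀ (Fin.last n) →
        ∀ f : EuclideanSpace ℝ (Fin (n + 1)) → ℝ,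
          ContDiff ℝ (⊤ : ℕ∞) f → tsupport f ⊆ ball x₀ 1 → f ≠ 0 →
          (∫⁻ x, ∫⁻ y,
              ENNReal.ofReal (|f x - f y| ^ p) /
                (besselMeasure n lam (ball x (dist x y) ∩ {z | 0 < z (Fin.last n)})) ^ 2
              ∂(besselMeasure n lam) ∂(besselMeasure n lam)) < ⊤ := by
  refine ⟨4, by norm_num, ?_⟩
  intro x₀ _ hx₀R f hf hsupp _
  set i := Fin.last n with hidef
  set q : ℝ := 2*lam with hqdef
  set dd : ℝ := (n:ℝ)+1 with hdddef
  have hq : 0 < q := by positivity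
  have hdd0 : 0 < dd := by positivity
  have hp0 : 0 < p := lt_trans hdd0 hp
  have hx₀4 : (4:ℝ) ≤ x₀ i := hx₀R
  -- Lipschitz bound
  have hcs : HasCompactSupport f :=
    IsCompact.of_isClosed_subset (isCompact_closedBall x₀ 1) (isClosed_tsupport f)
      (hsupp.trans ball_subset_closedBall)
  obtain ⟨K, hK⟩ := ContDiff.lipschitzWith_of_hasCompactSupport hcs hf (by simp)
  set L : ℝ := (K : ℝ) with hLdef
  have hL0 : 0 ≤ L := K.coe_nonneg
  have hlip : ∀ a b : El n, |f a - f b| ≤ L * dist a b := fun a b => by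
    have := hK.dist_le_mul a b
    rwa [Real.dist_eq] at this
  have hfb := fbound hlip hsupp
  -- constants
  set Vu : ℝ := (volume (ball (0:El n) 1)).toReal with hVudef
  have hVu : 0 < Vu :=
    ENNReal.toReal_pos (measure_ball_pos _ _ one_pos).ne' measure_ball_lt_top.ne
  set c1 : ℝ := Vu * (4:ℝ) ^ (-(dd + q)) with hc1def
  have hc1 : 0 < c1 := by positivity
  set H : Set (El n) := {z : El n | 0 < z i} with hHdef
  have hHmeas : MeasurableSet H :=
    measurableSet_lt measurable_const (by fun_prop)
  have hden : ∀ x : El n, 0 < x i → ∀ r : ℝ, 0 < r →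
      ENNReal.ofReal (c1 * (r ^ dd * (max (x i) r) ^ q)) ≤
        besselMeasure n lam (ball x r ∩ H) :=
    fun x hx r hr => lemA n hlam x hx hr
  -- numerator bound
  have hnum : ∀ x y : El n, ENNReal.ofReal (|f x - f y| ^ p) ≤
      ENNReal.ofReal ((L * min (dist x y) 6) ^ p) := fun x y =>
    ENNReal.ofReal_le_ofReal (Real.rpow_le_rpow (abs_nonneg _) (hfb x y) hp0.le)
  -- coordinate comparisons
  have hcoord : ∀ a b : El n, |a i - b i| ≤ dist a b := fun a b => by
    have := coord_abs_le_norm (a - b) i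
    simpa [dist_eq_norm] using this
  set ρ : El n → ℝ≥0∞ := fun x => ENNReal.ofReal ((x i) ^ q) with hρdef
  set F : El n → El n → ℝ≥0∞ := fun x y =>
    ENNReal.ofReal (|f x - f y| ^ p) /
      (besselMeasure n lam (ball x (dist x y) ∩ H)) ^ 2 with hFdef
  -- rewrite the double integral
  have hgoal : (∫⁻ x, ∫⁻ y, F x y ∂(besselMeasure n lam) ∂(besselMeasure n lam)) =
      ∫⁻ x in H, ρ x * ∫⁻ y in H, ρ y * F x y ∂volume ∂volume := by
    rw [bessel_lint n lam]
    congr 1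
    funext x
    rw [bessel_lint n lam]
  show (∫⁻ x, ∫⁻ y, F x y ∂(besselMeasure n lam) ∂(besselMeasure n lam)) < ⊤
  rw [hgoal]
  -- constants for case 1
  set CA : ℝ := L^p * 2^q / c1^2 with hCAdef
  have hCA0 : 0 ≤ CA := by positivity
  set J : ℝ≥0∞ := ∫⁻ u : El n, ENNReal.ofReal (min ‖u‖ 6 ^ p / ‖u‖ ^ (2*dd)) ∂volume
    with hJdef
  have hJ : J < ⊤ := J_lt_top n hp
  set K₁ : ℝ≥0∞ := ENNReal.ofReal CA * J with hK₁def
  have hK₁ : K₁ < ⊤ := ENNReal.mul_lt_top ofReal_lt_top hJ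
  -- case 1 : x ∈ ball x₀ 2
  have hC1x : ∀ x ∈ H ∩ ball x₀ 2, (∫⁻ y in H, ρ y * F x y ∂volume) ≤ K₁ := by
    intro x hx
    obtain ⟨hxH, hxB⟩ := hx
    have hxi2 : 2 ≤ x i := by
      have h1 := hcoord x x₀
      have h2 : dist x x₀ < 2 := mem_ball.mp hxB
      have := abs_sub_lt_iff.mp (lt_of_le_of_lt h1 h2)
      linarith [this.2]
    have hpt : ∀ y ∈ H, ρ y * F x y ≤
        ENNReal.ofReal (CA * (min (dist x y) 6 ^ p / (dist x y) ^ (2*dd))) := by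
      intro y hyH
      rcases eq_or_lt_of_le (dist_nonneg (x := x) (y := y)) with hr0 | hr
      · -- x = y
        have hxy : x = y := by
          rw [← dist_le_zero]
          exact le_of_eq hr0.symm
        subst hxy
        have : F x x = 0 := by
          rw [hFdef]
          simp only [sub_self, abs_zero]
          rw [Real.zero_rpow hp0.ne', ENNReal.ofReal_zero, ENNReal.zero_div]
        rw [this, mul_zero]
        exact zero_le
      · set r : ℝ := dist x y with hrdef
        set M : ℝ := max (x i) r with hMdef
        have hM1 : 1 ≤ M := le_trans (by linarith) (le_max_left _ _)
        have hM0 : 0 < M := by linarith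
        have hyi : 0 < y i := hyH
        have hyile : y i ≤ x i + r := by
          have := hcoord y x
          have := abs_sub_le_iff.mp this
          rw [dist_comm y x] at *
          linarith [this.1]
        have hmin0 : 0 ≤ min r 6 := le_min hr.le (by norm_num)
        -- ENNReal chain
        have hd := hden x (by linarith) r hr
        have step1 : F x y ≤ ENNReal.ofReal ((L * min r 6) ^ p) /
            (ENNReal.ofReal (c1 * (r ^ dd * M ^ q)))^2 :=
          ENNReal.div_le_div (hnum x y) (pow_le_pow_left' hd 2)
        have step2 : (ENNReal.ofReal (c1 * (r ^ dd * M ^ q)))^2 =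
            ENNReal.ofReal ((c1 * (r ^ dd * M ^ q))^2) :=
          (ENNReal.ofReal_pow (by positivity) 2).symm
        have hden2 : (0:ℝ) < (c1 * (r ^ dd * M ^ q))^2 := by positivity
        have step3 : ENNReal.ofReal ((L * min r 6) ^ p) /
            ENNReal.ofReal ((c1 * (r ^ dd * M ^ q))^2) =
            ENNReal.ofReal ((L * min r 6) ^ p / (c1 * (r ^ dd * M ^ q))^2) :=
          (ENNReal.ofReal_div_of_pos hden2).symm
        have step4 : ρ y * F x y ≤
            ENNReal.ofReal ((y i)^q * ((L * min r 6) ^ p / (c1 * (r ^ dd * M ^ q))^2)) := by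
          calc ρ y * F x y ≤ ρ y * ENNReal.ofReal ((L * min r 6) ^ p /
                (c1 * (r ^ dd * M ^ q))^2) := by
                refine mul_le_mul_right ?_ _
                rw [← step3, ← step2]
                exact step1
            _ = ENNReal.ofReal ((y i)^q * ((L * min r 6) ^ p /
                (c1 * (r ^ dd * M ^ q))^2)) := by
                rw [hρdef, ← ENNReal.ofReal_mul (by positivity)]
        refine le_trans step4 (ENNReal.ofReal_le_ofReal ?_)
        -- real inequality
        have hrdd2 : r ^ dd * r ^ dd = r ^ (2*dd) := by
          rw [← Real.rpow_add hr]; ring_nf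
        have hMq2 : M ^ q * M ^ q = M ^ (2*q) := by
          rw [← Real.rpow_add hM0]; ring_nf
        have hMqle : M ^ q ≤ M ^ (2*q) :=
          Real.rpow_le_rpow_of_exponent_le hM1 (by linarith)
        have hexp : (c1 * (r^dd * M^q))^2 = c1^2 * (r^(2*dd) * M^(2*q)) := by
          rw [← hrdd2, ← hMq2]; ring
        have hLmin : (L * min r 6)^p = L^p * (min r 6)^p := Real.mul_rpow hL0 hmin0
        have h2M : (y i)^q ≤ 2^q * M^q := by
          have h1 : (y i)^q ≤ (2*M)^q := by
            refine Real.rpow_le_rpow hyi.le ?_ hq.le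
            have : x i ≤ M := le_max_left _ _
            have : r ≤ M := le_max_right _ _
            linarith [le_max_left (x i) r]
          rwa [Real.mul_rpow (by norm_num) hM0.le] at h1
        rw [hexp, hLmin]
        have hpos1 : (0:ℝ) < r^(2*dd) := by positivity
        have hpos2 : (0:ℝ) < M^(2*q) := by positivity
        have hpos3 : (0:ℝ) < M^q := by positivity
        calc (y i)^q * (L^p * (min r 6)^p / (c1^2 * (r^(2*dd) * M^(2*q))))
            ≤ (2^q * M^q) * (L^p * (min r 6)^p / (c1^2 * (r^(2*dd) * M^(2*q)))) := by
              refine mul_le_mul_of_nonneg_right h2M (by positivity)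
          _ ≤ CA * ((min r 6)^p / r^(2*dd)) := by
              rw [hCAdef]
              have e1 : (2^q * M^q) * (L^p * (min r 6)^p / (c1^2 * (r^(2*dd) * M^(2*q)))) =
                  (2^q * M^q * (L^p * (min r 6)^p)) / (c1^2 * (r^(2*dd) * M^(2*q))) := by
                ring
              have e2 : (L^p * 2^q / c1^2) * ((min r 6)^p / r^(2*dd)) =
                  (L^p * 2^q * (min r 6)^p) / (c1^2 * r^(2*dd)) := by
                ring
              rw [e1, e2, div_le_div_iff₀ (by positivity) (by positivity)]
              nlinarith [mul_le_mul_of_nonneg_left hMqle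
                (show (0:ℝ) ≤ 2^q * L^p * (min r 6)^p * c1^2 * r^(2*dd) by positivity),
                sq_nonneg c1]
    -- integrate the pointwise bound
    calc (∫⁻ y in H, ρ y * F x y ∂volume)
        ≤ ∫⁻ y in H, ENNReal.ofReal (CA * (min (dist x y) 6 ^ p / (dist x y) ^ (2*dd)))
            ∂volume := setLIntegral_mono' hHmeas hpt
      _ ≤ ∫⁻ y, ENNReal.ofReal (CA * (min (dist x y) 6 ^ p / (dist x y) ^ (2*dd)))
            ∂volume := setLIntegral_le_lintegral _ _
      _ = ENNReal.ofReal CA *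
            ∫⁻ y, ENNReal.ofReal (min (dist x y) 6 ^ p / (dist x y) ^ (2*dd)) ∂volume := by
          rw [← lintegral_const_mul' _ _ ofReal_ne_top]
          congr 1
          funext y
          rw [← ENNReal.ofReal_mul hCA0]
      _ = ENNReal.ofReal CA * ∫⁻ u : El n,
            ENNReal.ofReal (min ‖u‖ 6 ^ p / ‖u‖ ^ (2*dd)) ∂volume := by
          congr 1
          have hdist : ∀ y : El n, dist x y = ‖y - x‖ := fun y => by
            rw [dist_comm, dist_eq_norm]
          simp_rw [hdist]
          have := lintegral_add_right_eq_self (μ := volume)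
            (fun u : El n => ENNReal.ofReal (min ‖u‖ 6 ^ p / ‖u‖ ^ (2*dd))) (-x)
          simp only [← sub_eq_add_neg] at this
          exact this
      _ = K₁ := rfl
  -- constants for case 2
  set s2 : ℝ := 2*dd + q with hs2def
  set C3 : ℝ := (x₀ i + 1)^q * (6*L)^p * (2:ℝ)^(2*(dd+q)) / c1^2 * Vu * (3/2)^s2
    with hC3def
  have hC30 : 0 ≤ C3 := by positivity
  -- case 2 : x ∉ ball x₀ 2
  have hC2x : ∀ x ∈ H \ ball x₀ 2,
      ρ x * (∫⁻ y in H, ρ y * F x y ∂volume) ≤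
        ENNReal.ofReal (C3 * (1 + dist x x₀) ^ (-s2)) := by
    intro x hx
    obtain ⟨hxH, hxB⟩ := hx
    set t : ℝ := dist x x₀ with htdef
    have ht2 : 2 ≤ t := not_lt.mp (fun h => hxB (mem_ball.mpr h))
    have ht0 : 0 < t := by linarith
    set M' : ℝ := max (x i) t with hM'def
    have hM't : t ≤ M' := le_max_right _ _
    have hM'0 : 0 < M' := lt_of_lt_of_le ht0 hM't
    have hxi0 : 0 < x i := hxH
    set g : ℝ := (x₀ i + 1)^q * ((L*6)^p / (c1 * ((t/2)^dd * (M'/2)^q))^2) with hgdef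
    have hg0 : 0 ≤ g := by positivity
    have hpt : ∀ y ∈ H, ρ y * F x y ≤
        (ball x₀ 1).indicator (fun _ => ENNReal.ofReal g) y := by
      intro y hyH
      by_cases hyB : y ∈ ball x₀ 1
      · rw [indicator_of_mem hyB]
        set r : ℝ := dist x y with hrdef
        have hrt : t - 1 ≤ r := by
          have := dist_triangle x y x₀
          have h1 : dist y x₀ < 1 := mem_ball.mp hyB
          rw [htdef, hrdef]
          linarith
        have hrt2 : t/2 ≤ r := by linarith
        have hr : 0 < r := by linarith
        set M : ℝ := max (x i) r with hMdef
        have hM0 : 0 < M := lt_max_of_lt_left hxi0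
        have hMM' : M'/2 ≤ M := by
          have h1 : t/2 ≤ r := hrt2
          have h2 : M'/2 = max ((x i)/2) (t/2) := by
            rw [hM'def]
            rcases le_total (x i) t with h | h
            · rw [max_eq_right h, max_eq_right (by linarith)]
            · rw [max_eq_left h, max_eq_left (by linarith)]
          rw [h2]
          refine max_le ?_ ?_
          · exact le_trans (by linarith) (le_max_left _ _)
          · exact le_trans h1 (le_max_right _ _)
        -- denominator
        have hd := hden x hxi0 r hr
        have hdlow : ENNReal.ofReal (c1 * ((t/2) ^ dd * (M'/2) ^ q)) ≤
            besselMeasure n lam (ball x r ∩ H) := by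
          refine le_trans (ENNReal.ofReal_le_ofReal ?_) hd
          have h1 : (t/2)^dd ≤ r^dd := Real.rpow_le_rpow (by linarith) hrt2 hdd0.le
          have h2 : (M'/2)^q ≤ M^q := Real.rpow_le_rpow (by linarith) hMM' hq.le
          have : (t/2)^dd * (M'/2)^q ≤ r^dd * M^q := by
            refine mul_le_mul h1 h2 (by positivity) (by positivity)
          nlinarith
        -- numerator
        have hnum2 : ENNReal.ofReal (|f x - f y| ^ p) ≤ ENNReal.ofReal ((L*6) ^ p) := by
          refine le_trans (hnum x y) (ENNReal.ofReal_le_ofReal ?_)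
          refine Real.rpow_le_rpow (by positivity) ?_ hp0.le
          have : min (dist x y) 6 ≤ 6 := min_le_right _ _
          nlinarith
        have hρy : ρ y ≤ ENNReal.ofReal ((x₀ i + 1)^q) := by
          rw [hρdef]
          refine ENNReal.ofReal_le_ofReal ?_
          refine Real.rpow_le_rpow (le_of_lt hyH) ?_ hq.le
          have h1 := hcoord y x₀
          have h2 : dist y x₀ < 1 := mem_ball.mp hyB
          have := abs_sub_le_iff.mp h1
          linarith [this.1]
        have hden2 : (0:ℝ) < (c1 * ((t/2)^dd * (M'/2)^q))^2 := by positivity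
        calc ρ y * F x y ≤ ENNReal.ofReal ((x₀ i + 1)^q) *
              (ENNReal.ofReal ((L*6) ^ p) /
                (ENNReal.ofReal (c1 * ((t/2) ^ dd * (M'/2) ^ q)))^2) := by
              refine mul_le_mul' hρy (ENNReal.div_le_div hnum2 (pow_le_pow_left' hdlow 2))
          _ = ENNReal.ofReal g := by
              rw [hgdef, ← ENNReal.ofReal_pow (by positivity),
                ← ENNReal.ofReal_div_of_pos hden2,
                ← ENNReal.ofReal_mul (by positivity)]
      · rw [indicator_of_notMem hyB]
        have hfy : f y = 0 := image_eq_zero_of_notMem_tsupport (fun h => hyB (hsupp h))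
        have hfx : f x = 0 := by
          refine image_eq_zero_of_notMem_tsupport (fun h => ?_)
          have := hsupp h
          rw [mem_ball] at this
          exact absurd (lt_of_lt_of_le this (by norm_num)) (not_lt.mpr ht2)
        have : F x y = 0 := by
          rw [hFdef]
          simp only [hfx, hfy, sub_zero, abs_zero]
          rw [Real.zero_rpow hp0.ne', ENNReal.ofReal_zero, ENNReal.zero_div]
        rw [this, mul_zero]
    -- integrate
    have hinner : (∫⁻ y in H, ρ y * F x y ∂volume) ≤ ENNReal.ofReal g * ENNReal.ofReal Vu := by
      calc (∫⁻ y in H, ρ y * F x y ∂volume)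
          ≤ ∫⁻ y in H, (ball x₀ 1).indicator (fun _ => ENNReal.ofReal g) y ∂volume :=
            setLIntegral_mono' hHmeas hpt
        _ ≤ ∫⁻ y, (ball x₀ 1).indicator (fun _ => ENNReal.ofReal g) y ∂volume :=
            setLIntegral_le_lintegral _ _
        _ = ENNReal.ofReal g * volume (ball x₀ 1) := by
            rw [lintegral_indicator measurableSet_ball, setLIntegral_const]
        _ = ENNReal.ofReal g * ENNReal.ofReal Vu := by
            rw [Measure.addHaar_ball_center volume x₀, hVudef,
              ENNReal.ofReal_toReal measure_ball_lt_top.ne]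
    calc ρ x * (∫⁻ y in H, ρ y * F x y ∂volume)
        ≤ ENNReal.ofReal ((x i)^q) * (ENNReal.ofReal g * ENNReal.ofReal Vu) :=
          mul_le_mul_right hinner _
      _ = ENNReal.ofReal ((x i)^q * g * Vu) := by
          rw [← ENNReal.ofReal_mul (by positivity), ← ENNReal.ofReal_mul (by positivity)]
          ring_nf
      _ ≤ ENNReal.ofReal (C3 * (1 + t) ^ (-s2)) := by
          refine ENNReal.ofReal_le_ofReal ?_
          -- real inequality for the far regime
          have ht20 : (0:ℝ) < t/2 := by linarith
          have hM20 : (0:ℝ) < M'/2 := by linarith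
          have e1 : (t/2)^dd * (t/2)^dd = (t/2)^(2*dd) := by
            rw [← Real.rpow_add ht20]; ring_nf
          have e2 : (M'/2)^q * (M'/2)^q = (M'/2)^(2*q) := by
            rw [← Real.rpow_add hM20]; ring_nf
          have hexp : (c1*((t/2)^dd*(M'/2)^q))^2 = c1^2 * ((t/2)^(2*dd) * (M'/2)^(2*q)) := by
            rw [← e1, ← e2]; ring
          have h_t2 : (t/2)^(2*dd) = t^(2*dd) / 2^(2*dd) :=
            Real.div_rpow ht0.le (by norm_num : (0:ℝ) ≤ 2) _
          have h_M2 : (M'/2)^(2*q) = M'^(2*q) / 2^(2*q) :=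
            Real.div_rpow hM'0.le (by norm_num : (0:ℝ) ≤ 2) _
          have h_2split : (2:ℝ)^(2*(dd+q)) = 2^(2*dd) * 2^(2*q) := by
            rw [← Real.rpow_add (by norm_num : (0:ℝ) < 2)]; ring_nf
          set X : ℝ := (x i)^q with hXdef
          have hX0 : 0 ≤ X := by positivity
          have hstep : X * (1+t)^s2 ≤ (3/2)^s2 * (t^(2*dd) * M'^(2*q)) := by
            have hA : (1+t)^s2 ≤ (3/2)^s2 * t^s2 := by
              rw [← Real.mul_rpow (by norm_num) ht0.le]
              exact Real.rpow_le_rpow (by linarith) (by linarith) (by positivity)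
            have hts : t^s2 = t^(2*dd) * t^q := by
              rw [hs2def, Real.rpow_add ht0]
            have hXt : X * t^q ≤ M'^(2*q) := by
              have h1 : X ≤ M'^q :=
                Real.rpow_le_rpow hxi0.le (le_max_left _ _) hq.le
              have h2 : t^q ≤ M'^q := Real.rpow_le_rpow ht0.le hM't hq.le
              calc X * t^q ≤ M'^q * M'^q :=
                    mul_le_mul h1 h2 (by positivity) (by positivity)
                _ = M'^(2*q) := by rw [← Real.rpow_add hM'0]; ring_nf
            calc X * (1+t)^s2 ≤ X * ((3/2)^s2 * t^s2) :=
                  mul_le_mul_of_nonneg_left hA hX0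
              _ = (3/2)^s2 * t^(2*dd) * (X * t^q) := by rw [hts]; ring
              _ ≤ (3/2)^s2 * t^(2*dd) * M'^(2*q) :=
                  mul_le_mul_of_nonneg_left hXt (by positivity)
              _ = (3/2)^s2 * (t^(2*dd) * M'^(2*q)) := by ring
          have hB0 : (0:ℝ) < (1+t)^s2 := by positivity
          have hD0 : (0:ℝ) < (c1*((t/2)^dd*(M'/2)^q))^2 := by positivity
          rw [Real.rpow_neg (by linarith : (0:ℝ) ≤ 1+t), ← div_eq_mul_inv]
          have hLHS : X * g * Vu =
              (X * ((x₀ i + 1)^q * (L*6)^p) * Vu) / (c1*((t/2)^dd*(M'/2)^q))^2 := by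
            rw [hgdef]; ring
          rw [hLHS, div_le_div_iff₀ hD0 hB0]
          have hL6 : ((L*6):ℝ)^p = ((6:ℝ)*L)^p := by rw [mul_comm]
          have hCD : C3 * (c1*((t/2)^dd*(M'/2)^q))^2 =
              ((x₀ i + 1)^q * ((6:ℝ)*L)^p * Vu) * ((3/2)^s2 * (t^(2*dd) * M'^(2*q))) := by
            rw [hC3def, hexp, h_t2, h_M2, h_2split]
            field_simp
          rw [hCD, hL6]
          calc X * ((x₀ i + 1)^q * ((6:ℝ)*L)^p) * Vu * (1+t)^s2
              = ((x₀ i + 1)^q * ((6:ℝ)*L)^p * Vu) * (X * (1+t)^s2) := by ring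
            _ ≤ ((x₀ i + 1)^q * ((6:ℝ)*L)^p * Vu) * ((3/2)^s2 * (t^(2*dd) * M'^(2*q))) :=
                mul_le_mul_of_nonneg_left hstep (by positivity)
  -- assemble
  set Bnd1 : El n → ℝ≥0∞ := fun x => (ball x₀ 2).indicator (fun x' => ρ x' * K₁) x
    with hB1def
  set Bnd2 : El n → ℝ≥0∞ := fun x => ENNReal.ofReal (C3 * (1 + dist x x₀) ^ (-s2))
    with hB2def
  have hB : ∀ x ∈ H, ρ x * (∫⁻ y in H, ρ y * F x y ∂volume) ≤ Bnd1 x + Bnd2 x := by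
    intro x hxH
    by_cases hxB : x ∈ ball x₀ 2
    · calc ρ x * (∫⁻ y in H, ρ y * F x y ∂volume) ≤ Bnd1 x := by
            rw [hB1def]
            simp only [indicator_of_mem hxB]
            exact mul_le_mul_right (hC1x x ⟨hxH, hxB⟩) _
        _ ≤ Bnd1 x + Bnd2 x := le_self_add
    · calc ρ x * (∫⁻ y in H, ρ y * F x y ∂volume) ≤ Bnd2 x := hC2x x ⟨hxH, hxB⟩
        _ ≤ Bnd1 x + Bnd2 x := le_add_self
  have hMB1 : Measurable Bnd1 := by
    refine Measurable.indicator ?_ measurableSet_ball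
    exact (by fun_prop : Measurable ρ).mul measurable_const
  have part1 : (∫⁻ x in H, Bnd1 x ∂volume) < ⊤ := by
    have h1 : (∫⁻ x in H, Bnd1 x ∂volume) =
        ∫⁻ x in ball x₀ 2 ∩ H, ρ x * K₁ ∂volume := by
      rw [hB1def, lintegral_indicator measurableSet_ball,
        Measure.restrict_restrict measurableSet_ball]
    rw [h1]
    have h2 : (∫⁻ x in ball x₀ 2 ∩ H, ρ x * K₁ ∂volume) ≤
        ∫⁻ _ in ball x₀ 2 ∩ H, ENNReal.ofReal ((x₀ i + 2)^q) * K₁ ∂volume := by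
      refine setLIntegral_mono' (measurableSet_ball.inter hHmeas) fun x hx => ?_
      refine mul_le_mul_left ?_ _
      rw [hρdef]
      refine ENNReal.ofReal_le_ofReal (Real.rpow_le_rpow (le_of_lt hx.2) ?_ hq.le)
      have h1 := hcoord x x₀
      have h2 : dist x x₀ < 2 := mem_ball.mp hx.1
      have := abs_sub_le_iff.mp h1
      linarith [this.1]
    refine lt_of_le_of_lt h2 ?_
    rw [setLIntegral_const]
    refine ENNReal.mul_lt_top (ENNReal.mul_lt_top ofReal_lt_top hK₁) ?_
    exact (measure_mono Set.inter_subset_left).trans_lt measure_ball_lt_top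
  have part2 : (∫⁻ x in H, Bnd2 x ∂volume) < ⊤ := by
    refine lt_of_le_of_lt (setLIntegral_le_lintegral _ _) ?_
    rw [hB2def]
    simp_rw [ENNReal.ofReal_mul hC30]
    rw [lintegral_const_mul' _ _ ofReal_ne_top]
    refine ENNReal.mul_lt_top ofReal_lt_top ?_
    exact far_int n x₀ (by rw [hs2def]; simp only [hdddef]; linarith)
  calc (∫⁻ x in H, ρ x * ∫⁻ y in H, ρ y * F x y ∂volume ∂volume)
      ≤ ∫⁻ x in H, (Bnd1 x + Bnd2 x) ∂volume := setLIntegral_mono' hHmeas hB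
    _ = (∫⁻ x in H, Bnd1 x ∂volume) + ∫⁻ x in H, Bnd2 x ∂volume :=
        lintegral_add_left hMB1 _
    _ < ⊤ := ENNReal.add_lt_top.mpr ⟨part1, part2⟩
end

section
/- Let μ be a doubling measure and D a system of dyadic cubes. For R ∈ D let E_R = {Q ∈ D : Q ⊇ R}. Suppose m_λ satisfies the lower-volume estimate m_λ(R)/m_λ(Q) ≤ C(ℓ(R)/ℓ(Q))^{n+1} for R ⊆ Q. Then for any r ≥ 1, p > 1 and sufficiently small ε > 0 (with (n+1)(1 − εp) > 0), Σ_{Q ∈ E_R} (m_λ(R)/m_λ(Q)) (log_{1/δ}(ℓ(Q)/ℓ(R)) + 1)^{2r−2} m_λ(Q)^{εp} ≤ C m_λ(R)^{εp}. -/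
/-!
A cube `Q ⊇ R` is either the ancestor of `R` exactly `k ≥ 0` generations above it (there is one
per generation), or a cube of a finer generation, which then coincides with `R` as a set. In both
cases the lower volume estimate gives `μ(R)/μ(Q) ≤ C δ^{|k|(n+1)}`. Writing
`(μ(R)/μ(Q)) μ(Q)^{εp} = (μ(R)/μ(Q))^{1-εp} μ(R)^{εp}`, the sum is at most `μ(R)^{εp}` times
`∑_{k ∈ ℤ} (C δ^{|k|(n+1)})^{1-εp} (|k|+1)^{2r-2}`, a series that converges
because `(n+1)(1-εp) > 0`.
-/

open MeasureTheory ENNReal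

namespace Real

theorem logb_inv_zpow_div_zpow {δ : ℝ} (hδ₀ : 0 < δ) (hδ₁ : δ ≠ 1) (a b : ℤ) :
    logb δ⁻¹ (δ ^ a / δ ^ b) = b - a := by
  rw [← zpow_sub₀ hδ₀.ne', logb_inv_base, ← rpow_intCast, logb_rpow hδ₀ hδ₁]
  push_cast
  ring

theorem zpow_div_zpow_rpow {δ : ℝ} (hδ : 0 < δ) (a b : ℤ) (d : ℝ) :
    (δ ^ a / δ ^ b) ^ d = δ ^ (((a - b : ℤ) : ℝ) * d) := by
  rw [← zpow_sub₀ hδ.ne', ← rpow_intCast, ← rpow_mul hδ.le]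

theorem add_one_rpow_le_abs_add_one_rpow (x : ℝ) {w : ℝ} (hw : 0 ≤ w) :
    (x + 1) ^ w ≤ (|x| + 1) ^ w :=
  calc (x + 1) ^ w ≤ |x + 1| ^ w := (le_abs_self _).trans (abs_rpow_le_abs_rpow _ _)
    _ ≤ (|x| + 1) ^ w :=
      rpow_le_rpow (abs_nonneg _) ((abs_add_le x 1).trans_eq (by rw [abs_one])) hw

theorem summable_add_one_rpow_mul_geometric (w : ℝ) {ρ : ℝ} (hρ₀ : 0 < ρ) (hρ₁ : ρ < 1) :
    Summable fun m : ℕ ↦ ((m : ℝ) + 1) ^ w * ρ ^ m := by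
  set N := ⌈w⌉₊
  have hshift : Summable fun m : ℕ ↦ ((m : ℝ) + 1) ^ N * ρ ^ (m + 1) := by
    have hpow : Summable fun m : ℕ ↦ (m : ℝ) ^ N * ρ ^ m :=
      summable_pow_mul_geometric_of_norm_lt_one N (by rwa [norm_eq_abs, abs_of_pos hρ₀])
    exact ((summable_nat_add_iff 1).mpr hpow).congr fun m ↦ by push_cast; ring
  have hN : Summable fun m : ℕ ↦ ((m : ℝ) + 1) ^ N * ρ ^ m :=
    (hshift.mul_left ρ⁻¹).congr fun m ↦ by field_simp; ring
  refine hN.of_nonneg_of_le (fun m ↦ by positivity) fun m ↦ ?_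
  gcongr
  calc ((m : ℝ) + 1) ^ w ≤ ((m : ℝ) + 1) ^ (N : ℝ) :=
        rpow_le_rpow_of_exponent_le (by linarith [m.cast_nonneg (α := ℝ)]) (Nat.le_ceil w)
    _ = ((m : ℝ) + 1) ^ N := rpow_natCast _ _

end Real

theorem ENNReal.div_mul_rpow_le {a b : ℝ≥0∞} (hab : a ≤ b) (s : ℝ) :
    a / b * b ^ s ≤ (a / b) ^ (1 - s) * a ^ s := by
  rcases eq_or_ne a 0 with rfl | ha₀
  · simp
  rcases eq_or_ne b ⊤ with rfl | hb
  · simp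
  have hb₀ : b ≠ 0 := (pos_of_ne_zero ha₀ |>.trans_le hab).ne'
  have hq₀ : a / b ≠ 0 := ENNReal.div_ne_zero.mpr ⟨ha₀, hb⟩
  have hq : a / b ≠ ⊤ := ENNReal.div_ne_top (ne_top_of_le_ne_top hb hab) hb₀
  refine le_of_eq ?_
  calc a / b * b ^ s = (a / b) ^ (1 - s) * ((a / b) ^ s * b ^ s) := by
        rw [← mul_assoc, ← ENNReal.rpow_add _ _ hq₀ hq, sub_add_cancel, ENNReal.rpow_one]
    _ = (a / b) ^ (1 - s) * a ^ s := by
        rw [← ENNReal.mul_rpow_of_ne_top hq hb, ENNReal.div_mul_cancel hb₀ hb]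

section DyadicCubes

variable {X ι : Type*} {Q : ι → Set X} {gen : ι → ℤ}

/-- `gen i` is the generation of the cube `Q i`, whose sidelength is `δ ^ gen i`. -/
def HasUniqueAncestors (Q : ι → Set X) (gen : ι → ℤ) : Prop :=
  ∀ (i : ι) (k : ℤ), k ≤ gen i → ∃! j, gen j = k ∧ Q i ⊆ Q j

def LowerVolumeBound [MeasurableSpace X] (μ : Measure X) (Q : ι → Set X) (gen : ι → ℤ)
    (δ C d : ℝ) : Prop :=
  ∀ i j, Q i ⊆ Q j → μ (Q i) ≤ ENNReal.ofReal (C * (δ ^ gen i / δ ^ gen j) ^ d) * μ (Q j)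

namespace HasUniqueAncestors

theorem subset_of_gen_lt (hQ : HasUniqueAncestors Q gen) {i j : ι} (hij : Q i ⊆ Q j)
    (hlt : gen i < gen j) : Q j ⊆ Q i := by
  obtain ⟨u, ⟨hu, hju⟩, -⟩ := hQ j (gen i) hlt.le
  obtain ⟨_, -, hi⟩ := hQ i (gen i) le_rfl
  have : u = i := (hi u ⟨hu, hij.trans hju⟩).trans (hi i ⟨rfl, subset_rfl⟩).symm
  exact this ▸ hju

theorem injective_gen (hQ : HasUniqueAncestors Q gen) (i : ι) :
    Function.Injective fun j : {j // Q i ⊆ Q j} ↦ gen j := by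
  rintro ⟨j, hj⟩ ⟨j', hj'⟩ (hg : gen j = gen j')
  congr
  rcases le_or_gt (gen j) (gen i) with hle | hlt
  · obtain ⟨_, -, h⟩ := hQ i (gen j) hle
    exact (h j ⟨rfl, hj⟩).trans (h j' ⟨hg.symm, hj'⟩).symm
  · -- a cube finer than `Q i` containing it is a copy of `Q i`, so `j'` is an ancestor of `j`
    obtain ⟨_, -, h⟩ := hQ j (gen j) le_rfl
    exact (h j ⟨rfl, subset_rfl⟩).trans
      (h j' ⟨hg.symm, (hQ.subset_of_gen_lt hj hlt).trans hj'⟩).symm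

end HasUniqueAncestors

/-- Bound for the term of the sum coming from the cube `k` generations above `R` (for `k < 0`, a
cube of a finer generation that coincides with `R`): `C δ^{|k| d}` bounds `μ(R)/μ(Q)`, and
`log_{1/δ}(ℓ(Q)/ℓ(R)) = k`. -/
noncomputable def generationWeight (C δ d s w : ℝ) (k : ℤ) : ℝ :=
  (C * δ ^ (|(k : ℝ)| * d)) ^ (1 - s) * (|(k : ℝ)| + 1) ^ w

theorem generationWeight_nonneg {C δ : ℝ} (hC : 0 ≤ C) (hδ : 0 ≤ δ) (d s w : ℝ) (k : ℤ) :
    0 ≤ generationWeight C δ d s w k := by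
  unfold generationWeight
  positivity

theorem summable_generationWeight {C δ d s : ℝ} (hC : 0 ≤ C) (hδ₀ : 0 < δ) (hδ₁ : δ < 1)
    (hds : 0 < d * (1 - s)) (w : ℝ) : Summable (generationWeight C δ d s w) := by
  have hnat : Summable fun m : ℕ ↦ generationWeight C δ d s w m := by
    refine ((Real.summable_add_one_rpow_mul_geometric w (Real.rpow_pos_of_pos hδ₀ _)
      (Real.rpow_lt_one hδ₀.le hδ₁ hds)).mul_left (C ^ (1 - s))).congr fun m ↦ ?_
    rw [generationWeight, Int.cast_natCast, abs_of_nonneg m.cast_nonneg,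
      Real.mul_rpow hC (by positivity), ← Real.rpow_natCast, ← Real.rpow_mul hδ₀.le,
      ← Real.rpow_mul hδ₀.le]
    ring_nf
  exact .of_nat_of_neg hnat (by simpa [generationWeight] using hnat)

namespace LowerVolumeBound

variable [MeasurableSpace X] {μ : Measure X} {δ C d : ℝ}

theorem measure_div_le (hvol : LowerVolumeBound μ Q gen δ C d) (hQ : HasUniqueAncestors Q gen)
    (hδ : 0 < δ) {i j : ι} (hij : Q i ⊆ Q j) :
    μ (Q i) / μ (Q j) ≤ ENNReal.ofReal (C * δ ^ (|(gen i : ℝ) - gen j| * d)) := by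
  rcases le_or_gt (gen j) (gen i) with hle | hlt
  · have := hvol i j hij
    rw [Real.zpow_div_zpow_rpow hδ, Int.cast_sub] at this
    rw [abs_of_nonneg (sub_nonneg.mpr (Int.cast_le.mpr hle))]
    exact ENNReal.div_le_of_le_mul this
  · have hji := hQ.subset_of_gen_lt hij hlt
    have heq : μ (Q j) = μ (Q i) := (measure_mono hji).antisymm (measure_mono hij)
    have := hvol j i hji
    rw [Real.zpow_div_zpow_rpow hδ, Int.cast_sub, heq] at this
    rw [heq, abs_sub_comm, abs_of_pos (sub_pos.mpr (Int.cast_lt.mpr hlt))]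
    exact ENNReal.div_le_of_le_mul this

theorem term_le (hvol : LowerVolumeBound μ Q gen δ C d) (hQ : HasUniqueAncestors Q gen)
    (hδ₀ : 0 < δ) (hδ₁ : δ ≠ 1) (hC : 0 ≤ C) {s w : ℝ} (hs : s ≤ 1) (hw : 0 ≤ w) {i j : ι}
    (hij : Q i ⊆ Q j) :
    μ (Q i) / μ (Q j) * ENNReal.ofReal ((Real.logb δ⁻¹ (δ ^ gen j / δ ^ gen i) + 1) ^ w) *
        μ (Q j) ^ s ≤
      ENNReal.ofReal (generationWeight C δ d s w (gen i - gen j)) * μ (Q i) ^ s := by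
  set k : ℝ := (gen i : ℝ) - gen j
  have hlog : Real.logb δ⁻¹ (δ ^ gen j / δ ^ gen i) = k :=
    Real.logb_inv_zpow_div_zpow hδ₀ hδ₁ _ _
  have hratio :
      (μ (Q i) / μ (Q j)) ^ (1 - s) ≤ ENNReal.ofReal ((C * δ ^ (|k| * d)) ^ (1 - s)) := by
    rw [← ENNReal.ofReal_rpow_of_nonneg (by positivity) (sub_nonneg.2 hs)]
    exact ENNReal.rpow_le_rpow (hvol.measure_div_le hQ hδ₀ hij) (sub_nonneg.2 hs)
  calc _ = μ (Q i) / μ (Q j) * μ (Q j) ^ s * ENNReal.ofReal ((k + 1) ^ w) := by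
        rw [hlog]; ring
    _ ≤ (μ (Q i) / μ (Q j)) ^ (1 - s) * μ (Q i) ^ s * ENNReal.ofReal ((|k| + 1) ^ w) := by
        gcongr ?_ * ENNReal.ofReal ?_
        · exact ENNReal.div_mul_rpow_le (measure_mono hij) s
        · exact Real.add_one_rpow_le_abs_add_one_rpow k hw
    _ ≤ ENNReal.ofReal ((C * δ ^ (|k| * d)) ^ (1 - s)) * μ (Q i) ^ s *
          ENNReal.ofReal ((|k| + 1) ^ w) := by
        gcongr
    _ = _ := by
        rw [generationWeight, Int.cast_sub, ENNReal.ofReal_mul (by positivity)]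
        ring

end LowerVolumeBound

end DyadicCubes

theorem stmt16_general {X : Type*} {ι : Type*} [MeasurableSpace X]
    (μ : Measure X) (Q : ι → Set X) (gen : ι → ℤ)
    (δ : ℝ) (hδ : δ ∈ Set.Ioo (0 : ℝ) 1) (n : ℕ)
    (Cvol : ℝ) (hCvol : 0 < Cvol)
    (hvol : ∀ i j, Q i ⊆ Q j →
      μ (Q i) ≤ ENNReal.ofReal (Cvol * (δ ^ gen i / δ ^ gen j) ^ ((n : ℝ) + 1)) * μ (Q j))
    (hanc : ∀ (i : ι) (k : ℤ), k ≤ gen i → ∃! j, gen j = k ∧ Q i ⊆ Q j)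
    (r p ε : ℝ) (hr : 1 ≤ r)
    (hεp : 0 < ((n : ℝ) + 1) * (1 - ε * p)) :
    ∃ C : ℝ≥0∞, C ≠ ⊤ ∧ ∀ i : ι,
      (∑' j : {j : ι // Q i ⊆ Q j},
          (μ (Q i) / μ (Q (j : ι))) *
            ENNReal.ofReal ((Real.logb δ⁻¹ (δ ^ gen (j : ι) / δ ^ gen i) + 1) ^ (2 * r - 2)) *
            μ (Q (j : ι)) ^ (ε * p))
        ≤ C * μ (Q i) ^ (ε * p) := by
  obtain ⟨hδ₀, hδ₁⟩ := hδ
  have hεp_le : ε * p ≤ 1 := (sub_pos.mp (pos_of_mul_pos_right hεp (by positivity))).le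
  set G := generationWeight Cvol δ ((n : ℝ) + 1) (ε * p) (2 * r - 2)
  refine ⟨ENNReal.ofReal (∑' k, G k), ofReal_ne_top, fun i ↦ ?_⟩
  calc _ ≤ ∑' j : {j // Q i ⊆ Q j}, ENNReal.ofReal (G (gen i - gen j)) * μ (Q i) ^ (ε * p) :=
        ENNReal.tsum_le_tsum fun j ↦ LowerVolumeBound.term_le hvol hanc hδ₀ hδ₁.ne hCvol.le
          hεp_le (by linarith) j.2
    _ ≤ ∑' k : ℤ, ENNReal.ofReal (G k) * μ (Q i) ^ (ε * p) :=
        ENNReal.tsum_comp_le_tsum_of_injective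
          ((sub_right_injective (b := gen i)).comp (HasUniqueAncestors.injective_gen hanc i)) _
    _ = ENNReal.ofReal (∑' k, G k) * μ (Q i) ^ (ε * p) := by
        rw [ENNReal.tsum_mul_right, ENNReal.ofReal_tsum_of_nonneg
          (generationWeight_nonneg hCvol.le hδ₀.le _ _ _)
          (summable_generationWeight hCvol.le hδ₀ hδ₁ hεp _)]

/-- let `μ` be a measure and `D` a system of dyadic cubes (with sidelength
`ℓ(Q) = δ^{gen Q}`) in which each cube has exactly one ancestor per coarser generation, and
suppose the lower-volume estimate `μ(R)/μ(Q) ≤ C (ℓ(R)/ℓ(Q))^{n+1}` holds for `R ⊆ Q`. Then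
for `r ≥ 1`, `p > 1` and `ε > 0` small (so that `(n+1)(1-εp) > 0`),
`∑_{Q ⊇ R} (μ(R)/μ(Q)) (log_{1/δ}(ℓ(Q)/ℓ(R)) + 1)^{2r-2} μ(Q)^{εp} ≤ C' μ(R)^{εp}`
uniformly in `R`. -/
theorem stmt16 {X : Type*} {ι : Type*} [Countable ι] [MeasurableSpace X]
    (μ : Measure X) (Q : ι → Set X) (gen : ι → ℤ)
    (δ : ℝ) (hδ : δ ∈ Set.Ioo (0 : ℝ) 1) (n : ℕ)
    (Cvol : ℝ) (hCvol : 0 < Cvol)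
    (hvol : ∀ i j, Q i ⊆ Q j →
      μ (Q i) ≤ ENNReal.ofReal (Cvol * (δ ^ gen i / δ ^ gen j) ^ ((n : ℝ) + 1)) * μ (Q j))
    (hanc : ∀ (i : ι) (k : ℤ), k ≤ gen i → ∃! j, gen j = k ∧ Q i ⊆ Q j)
    (r p ε : ℝ) (hr : 1 ≤ r) (hp : 1 < p) (hε : 0 < ε)
    (hεp : 0 < ((n : ℝ) + 1) * (1 - ε * p)) :
    ∃ C : ℝ≥0∞, C ≠ ⊤ ∧ ∀ i : ι,
      (∑' j : {j : ι // Q i ⊆ Q j},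
          (μ (Q i) / μ (Q (j : ι))) *
            ENNReal.ofReal ((Real.logb δ⁻¹ (δ ^ gen (j : ι) / δ ^ gen i) + 1) ^ (2 * r - 2)) *
            μ (Q (j : ι)) ^ (ε * p))
        ≤ C * μ (Q i) ^ (ε * p) :=
  stmt16_general μ Q gen δ hδ n Cvol hCvol hvol hanc r p ε hr hεp
end
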